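/- arXiv:math-ph/0209004 — 9 statements merged into one kernel-verified Lean document; each statement's English description precedes it below -/
import Mathlib

section
/- There exists a constant C > 0, depending only on c₁, c₂, M and η₀ (and not on ε, η or j), such that |d^{j+1} − d^j| ≤ C (|d_{j+1} − d_j| + ε) for every admissible index j. (Second estimate of Lemma 2.6: the variation of the normalized mapped lengths is controlled by the variation of the normalized original lengths plus a term of order ε.) -/
open Real

/-- Mean value theorem on a possibly degenerate closed interval. -/
lemma mvt_aux (θ : ℝ → ℝ) (hθ : Differentiable ℝ θ) (x y : ℝ) (hxy : x ≤ y) :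
    ∃ ξ ∈ Set.Icc x y, θ y - θ x = deriv θ ξ * (y - x) := by
  rcases eq_or_lt_of_le hxy with h | h
  · exact ⟨x, ⟨le_refl x, hxy⟩, by rw [← h]; ring⟩
  · obtain ⟨c, hc, hc'⟩ := exists_deriv_eq_slope θ h hθ.continuous.continuousOn
      (hθ.differentiableOn)
    refine ⟨c, ⟨hc.1.le, hc.2.le⟩, ?_⟩
    rw [hc', div_mul_eq_mul_div, mul_div_assoc, div_self (sub_ne_zero.mpr h.ne'), mul_one]

/-- Lipschitz estimate from a bound on the derivative. -/
lemma lip_aux (g : ℝ → ℝ) (hg : Differentiable ℝ g) (M : ℝ)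
    (hM : ∀ x, |deriv g x| ≤ M) (u v : ℝ) : |g u - g v| ≤ M * |u - v| := by
  rcases le_total v u with h | h
  · obtain ⟨ξ, _, heq⟩ := mvt_aux g hg v u h
    rw [heq, abs_mul]
    exact mul_le_mul_of_nonneg_right (hM ξ) (abs_nonneg _)
  · obtain ⟨ξ, _, heq⟩ := mvt_aux g hg u v h
    rw [abs_sub_comm, abs_sub_comm u v, heq, abs_mul]
    exact mul_le_mul_of_nonneg_right (hM ξ) (abs_nonneg _)

set_option maxHeartbeats 1000000 in
/-- Second estimate of Lemma 2.6: there is a constant `C > 0`, depending only on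
`c₁, c₂, M, η₀` (not on `ε`, `η` or `j`), such that
`|d^{j+1} − d^j| ≤ C (|d_{j+1} − d_j| + ε)` for every index `j`. -/
theorem lemma2_6_second_estimate
    (c₁ c₂ M η₀ : ℝ) (hc₁ : 0 < c₁) (hc₁₂ : c₁ ≤ c₂) (hM : 0 < M) (hη₀ : 0 < η₀) :
    ∃ C > 0, ∀ (ε η : ℝ), 0 < ε → η ∈ Set.Ioc 0 η₀ →
      ∀ (θ : ℝ → ℝ) (s a b : ℕ → ℝ),
        Differentiable ℝ θ → Differentiable ℝ (deriv θ) →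
        (∀ x : ℝ, c₁ ≤ deriv θ x ∧ deriv θ x ≤ c₂) →
        (∀ x : ℝ, |deriv (deriv θ) x| ≤ M) →
        (∀ j, s j ≤ s (j + 1)) →
        (∀ j, θ (s (j + 1)) - θ (s j) = ε * π) →
        (∀ j, 0 ≤ a j) → (∀ j, 0 ≤ b j) →
        (∀ j, a j + b j ≤ 2 * η / c₂) →
        ∀ j,
          |(θ (s (j + 1) + ε * b (j + 1)) - θ (s (j + 1) - ε * a (j + 1))) / (2 * ε * η)
              - (θ (s j + ε * b j) - θ (s j - ε * a j)) / (2 * ε * η)|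
            ≤ C * (|(a (j + 1) + b (j + 1)) / (2 * η) - (a j + b j) / (2 * η)| + ε) := by
  have hπ := Real.pi_pos
  have hc₂ : (0:ℝ) < c₂ := hc₁.trans_le hc₁₂
  set K : ℝ := (π + 4 * η₀) / c₁ with hKdef
  set Q : ℝ := M * (π + 4 * η₀) / (c₁ * c₁) with hQdef
  have hKpos : 0 < K := by positivity
  have hQpos : 0 < Q := by positivity
  have hMK : M * K = Q * c₁ := by rw [hKdef, hQdef]; field_simp
  refine ⟨c₂ + Q, by positivity, ?_⟩
  intro ε η hε hη θ s a b hθ hθ' hd1 hd2 hs hθs ha hb hab j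
  obtain ⟨hη0, hηη₀⟩ := hη
  obtain ⟨ξ₀, hξ₀, hE₀⟩ := mvt_aux θ hθ (s j - ε * a j) (s j + ε * b j)
    (by nlinarith [ha j, hb j])
  obtain ⟨ξ₁, hξ₁, hE₁⟩ := mvt_aux θ hθ (s (j+1) - ε * a (j+1)) (s (j+1) + ε * b (j+1))
    (by nlinarith [ha (j+1), hb (j+1)])
  obtain ⟨ζ, hζ, hEs⟩ := mvt_aux θ hθ (s j) (s (j+1)) (hs j)
  -- step spacing
  have hss : c₁ * (s (j+1) - s j) ≤ ε * π := by
    nlinarith [(hd1 ζ).1, hs j, hθs j, hEs,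
      mul_le_mul_of_nonneg_right (hd1 ζ).1 (sub_nonneg.mpr (hs j))]
  -- bounds on a+b
  have habc : ∀ k, c₁ * (a k + b k) ≤ 2 * η := by
    intro k
    have h1 : c₂ * (a k + b k) ≤ 2 * η := by
      have := hab k
      rw [le_div_iff₀ hc₂] at this
      · nlinarith
    nlinarith [ha k, hb k]
  have habη₀ : ∀ k, c₁ * (a k + b k) ≤ 2 * η₀ := fun k => (habc k).trans (by linarith)
  -- |ξ₁ - ξ₀| ≤ ε * K
  have hxi : |ξ₁ - ξ₀| ≤ ε * K := by
    have hxic : c₁ * |ξ₁ - ξ₀| ≤ ε * (π + 4 * η₀) := by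
      have h1 := hξ₀.1; have h2 := hξ₀.2; have h3 := hξ₁.1; have h4 := hξ₁.2
      have k1 := mul_le_mul_of_nonneg_left h4 hc₁.le
      have k2 := mul_le_mul_of_nonneg_left h1 hc₁.le
      have k3 := mul_le_mul_of_nonneg_left h2 hc₁.le
      have k4 := mul_le_mul_of_nonneg_left h3 hc₁.le
      have k5 := mul_le_mul_of_nonneg_left (habη₀ (j+1)) hε.le
      have k6 := mul_le_mul_of_nonneg_left (habη₀ j) hε.le
      have k7 := mul_nonneg (mul_nonneg hc₁.le hε.le) (ha (j+1))
      have k8 := mul_nonneg (mul_nonneg hc₁.le hε.le) (hb j)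
      have k9 := mul_nonneg (mul_nonneg hc₁.le hε.le) (ha j)
      have k10 := mul_nonneg (mul_nonneg hc₁.le hε.le) (hb (j+1))
      have k11 := mul_le_mul_of_nonneg_left (hs j) hc₁.le
      rcases abs_cases (ξ₁ - ξ₀) with ⟨heq, _⟩ | ⟨heq, _⟩ <;> rw [heq] <;>
        [skip; skip] <;> ring_nf at * <;> linarith
    rw [hKdef, ← mul_div_assoc, le_div_iff₀ hc₁]
    linarith [hxic]
  -- Lipschitz bound for deriv θ
  have hlip : |deriv θ ξ₁ - deriv θ ξ₀| ≤ M * (ε * K) :=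
    (lip_aux (deriv θ) hθ' M hd2 ξ₁ ξ₀).trans (mul_le_mul_of_nonneg_left hxi hM.le)
  have h2εη : (0:ℝ) < 2 * ε * η := by positivity
  have h2η : (0:ℝ) < 2 * η := by positivity
  rw [div_sub_div_same, div_sub_div_same, abs_div, abs_div, abs_of_pos h2εη,
    abs_of_pos h2η, div_le_iff₀ h2εη, hE₀, hE₁]
  set E₁ := deriv θ ξ₁
  set E₀ := deriv θ ξ₀
  set A₁ := a (j+1) + b (j+1)
  set A₀ := a j + b j
  have hre : E₁ * (s (j+1) + ε * b (j+1) - (s (j+1) - ε * a (j+1)))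
      - E₀ * (s j + ε * b j - (s j - ε * a j))
      = ε * (E₁ * (A₁ - A₀) + (E₁ - E₀) * A₀) := by
    rw [show A₁ = a (j+1) + b (j+1) from rfl, show A₀ = a j + b j from rfl]; ring
  rw [hre, abs_mul, abs_of_pos hε]
  have hcore : |E₁ * (A₁ - A₀) + (E₁ - E₀) * A₀| ≤ c₂ * |A₁ - A₀| + M * (ε * K) * A₀ := by
    refine (abs_add_le _ _).trans ?_
    gcongr ?_ + ?_
    · rw [abs_mul]
      have hE : |E₁| ≤ c₂ := by
        rw [abs_of_nonneg (le_trans hc₁.le (hd1 ξ₁).1)]; exact (hd1 ξ₁).2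
      exact mul_le_mul_of_nonneg_right hE (abs_nonneg _)
    · rw [abs_mul, abs_of_nonneg (show (0:ℝ) ≤ A₀ from add_nonneg (ha j) (hb j))]
      exact mul_le_mul_of_nonneg_right hlip (add_nonneg (ha j) (hb j))
  have hrhs : (c₂ + Q) * (|A₁ - A₀| / (2 * η) + ε) * (2 * ε * η)
      = (c₂ + Q) * |A₁ - A₀| * ε + (c₂ + Q) * ε * (2 * ε * η) := by
    field_simp
  rw [hrhs]
  have hA₀ := habc j
  have hA₀nn : (0:ℝ) ≤ A₀ := add_nonneg (ha j) (hb j)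
  have t1 : ε * |E₁ * (A₁ - A₀) + (E₁ - E₀) * A₀|
      ≤ ε * (c₂ * |A₁ - A₀| + M * (ε * K) * A₀) :=
    mul_le_mul_of_nonneg_left hcore hε.le
  have t2 : ε * (c₂ * |A₁ - A₀| + M * (ε * K) * A₀)
      = ε * c₂ * |A₁ - A₀| + (ε * ε * Q) * (c₁ * A₀) := by
    linear_combination (ε * ε * A₀) * hMK
  have t3 : (ε * ε * Q) * (c₁ * A₀) ≤ (ε * ε * Q) * (2 * η) :=
    mul_le_mul_of_nonneg_left hA₀ (by positivity)
  have t4 : (0:ℝ) ≤ Q * |A₁ - A₀| * ε := by positivity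
  have t5 : (0:ℝ) ≤ c₂ * (ε * (2 * ε * η)) := by positivity
  linarith [t1, t2, t3, t4, t5]
end

section
/- For every ξ₁ ∈ ℝ with sin ξ₁ ≠ 0, the function t ↦ X(ξ₁, t) is differentiable at t = 0 and its derivative there equals −1. (This expresses the Neumann boundary condition ∂X/∂ξ₂ = −1 on Γ⁰ = {ξ₂ = 0, ξ₁ ≠ π j} satisfied by the boundary-layer function X.) -/
/-- The boundary-layer function `X(ξ) = Re ln sin z + ln 2 − ξ₂`, `z = ξ₁ + i ξ₂`. -/
noncomputable def boundaryLayerX (ξ : ℝ × ℝ) : ℝ :=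
  Real.log ‖Complex.sin ((ξ.1 : ℂ) + (ξ.2 : ℂ) * Complex.I)‖ +
    Real.log 2 - ξ.2

/-! Since `|sin (x + i y)|² = sin² x + sinh² y`, the map `t ↦ log |sin (x + i t)|` has derivative
`sinh t cosh t / (sin² x + sinh² t)`, which vanishes at `t = 0` as long as `sin x ≠ 0`; the
Neumann derivative of `X` is therefore that of `-ξ₂`. -/

namespace Complex

theorem normSq_sin_add_mul_I (x y : ℝ) :
    normSq (sin (x + y * I)) = Real.sin x ^ 2 + Real.sinh y ^ 2 := by
  have hsin : sin (x + y * I) = (Real.sin x * Real.cosh y : ℝ) +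
      (Real.cos x * Real.sinh y : ℝ) * I := by
    rw [sin_add, cos_mul_I, sin_mul_I]
    push_cast
    ring
  rw [hsin, normSq_add_mul_I]
  nlinarith [Real.sin_sq_add_cos_sq x, Real.cosh_sq y]

theorem log_norm_sin_add_mul_I (x y : ℝ) :
    Real.log ‖sin (x + y * I)‖ = Real.log (Real.sin x ^ 2 + Real.sinh y ^ 2) / 2 := by
  rw [norm_def, normSq_sin_add_mul_I, Real.log_sqrt (by positivity)]

theorem hasDerivAt_log_norm_sin_add_mul_I (x y : ℝ) (h : Real.sin x ^ 2 + Real.sinh y ^ 2 ≠ 0) :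
    HasDerivAt (fun t : ℝ => Real.log ‖sin (x + t * I)‖)
      (Real.sinh y * Real.cosh y / (Real.sin x ^ 2 + Real.sinh y ^ 2)) y := by
  simp only [log_norm_sin_add_mul_I]
  have hsum : HasDerivAt (fun t => Real.sin x ^ 2 + Real.sinh t ^ 2)
      (2 * Real.sinh y * Real.cosh y) y := by
    simpa using ((Real.hasDerivAt_sinh y).pow 2).const_add (Real.sin x ^ 2)
  exact ((hsum.log h).div_const 2).congr_deriv (by ring)

end Complex

/-- At every boundary point `(ξ₁, 0)` with `sin ξ₁ ≠ 0`, the function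
`t ↦ X(ξ₁, t)` is differentiable at `t = 0` with derivative `−1`:
the Neumann condition `∂X/∂ξ₂ = −1` on `Γ⁰`. -/
theorem boundaryLayerX_neumann (ξ₁ : ℝ) (h : Real.sin ξ₁ ≠ 0) :
    HasDerivAt (fun t => boundaryLayerX (ξ₁, t)) (-1) 0 := by
  have hlog := Complex.hasDerivAt_log_norm_sin_add_mul_I ξ₁ 0 (by simpa using h)
  simpa [boundaryLayerX, Pi.sub_def] using
    (hlog.add_const (Real.log 2)).sub (hasDerivAt_id' (0 : ℝ))
end

section
/- For every (ξ₁, ξ₂) ∈ ℝ² with ξ₂ ≥ 1 one has |X(ξ₁, ξ₂)| ≤ 2 exp(−2 ξ₂). (Exponential decay of the boundary-layer function X as ξ₂ → +∞, uniformly in ξ₁.) -/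
/-!
Factoring `e^{-iz}` out of `sin z = (e^{-iz} - e^{iz}) i / 2` gives `|sin z| = e^{ξ₂} |1 - w| / 2`
with `w = e^{2iz}`, so `X = log |1 - w| = Re log (1 - w)`, and `|w| = e^{-2ξ₂} ≤ e^{-2} < 1/2`
for `ξ₂ ≥ 1`. The bound `|log (1 + u)| ≤ (3/2) |u|` for `|u| ≤ 1/2` finishes the proof.
-/

open Complex

lemma Complex.norm_exp_two_mul_mul_I (z : ℂ) : ‖exp (2 * z * I)‖ = Real.exp (-2 * z.im) := by
  rw [norm_exp]
  simp

lemma Complex.norm_sin_eq (z : ℂ) : ‖sin z‖ = Real.exp z.im * ‖1 - exp (2 * z * I)‖ / 2 := by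
  have hfactor : sin z = exp (-z * I) * (1 - exp (2 * z * I)) * I / 2 := by
    rw [sin, mul_one_sub, ← exp_add]
    ring_nf
  rw [hfactor, norm_div, norm_mul, norm_mul, norm_exp, norm_I, Complex.norm_two]
  simp

lemma Complex.one_sub_exp_two_mul_mul_I_ne_zero {z : ℂ} (hz : z.im ≠ 0) :
    1 - exp (2 * z * I) ≠ 0 := by
  intro h
  have hnorm := congrArg norm (sub_eq_zero.1 h).symm
  rw [norm_exp_two_mul_mul_I, norm_one, Real.exp_eq_one_iff] at hnorm
  exact hz (by linarith)

lemma Complex.abs_log_norm_one_add_le {u : ℂ} (hu : ‖u‖ ≤ 1 / 2) :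
    |Real.log ‖1 + u‖| ≤ 3 / 2 * ‖u‖ := by
  rw [← log_re]
  exact (abs_re_le_norm _).trans (norm_log_one_add_half_le_self hu)

lemma boundaryLayerX_eq_log_norm_one_sub {ξ : ℝ × ℝ} (hξ : ξ.2 ≠ 0) :
    boundaryLayerX ξ = Real.log ‖1 - exp (2 * (ξ.1 + ξ.2 * I) * I)‖ := by
  have him : ((ξ.1 : ℂ) + ξ.2 * I).im = ξ.2 := by simp
  have hne := one_sub_exp_two_mul_mul_I_ne_zero (him ▸ hξ)
  rw [boundaryLayerX, norm_sin_eq, him, Real.log_div (by positivity) two_ne_zero,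
    Real.log_mul (Real.exp_pos _).ne' (norm_ne_zero_iff.2 hne), Real.log_exp]
  ring

lemma Real.exp_neg_two_le_half : Real.exp (-2) ≤ 1 / 2 := by
  rw [Real.exp_neg, inv_le_comm₀ (Real.exp_pos 2) one_half_pos]
  linarith [Real.add_one_le_exp (2 : ℝ)]

/-- Exponential decay of the boundary-layer function `X` as `ξ₂ → +∞`:
`|X(ξ₁, ξ₂)| ≤ 2 exp(−2 ξ₂)` for `ξ₂ ≥ 1`, uniformly in `ξ₁`. -/
theorem boundaryLayerX_decay (ξ₁ ξ₂ : ℝ) (h : 1 ≤ ξ₂) :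
    |boundaryLayerX (ξ₁, ξ₂)| ≤ 2 * Real.exp (-2 * ξ₂) := by
  set w := exp (2 * (ξ₁ + ξ₂ * I) * I)
  have hw : ‖-w‖ = Real.exp (-2 * ξ₂) := by
    rw [norm_neg, norm_exp_two_mul_mul_I]
    simp
  have hw_small : ‖-w‖ ≤ 1 / 2 :=
    hw ▸ (Real.exp_le_exp.2 (by linarith)).trans Real.exp_neg_two_le_half
  calc |boundaryLayerX (ξ₁, ξ₂)| = |Real.log ‖1 + -w‖| := by
        rw [boundaryLayerX_eq_log_norm_one_sub (show ξ₂ ≠ 0 by linarith), ← sub_eq_add_neg]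
    _ ≤ 3 / 2 * Real.exp (-2 * ξ₂) := hw ▸ Complex.abs_log_norm_one_add_le hw_small
    _ ≤ 2 * Real.exp (-2 * ξ₂) := by gcongr; norm_num
end

section
/- For all integers i ≥ 0 and k ≥ 0 and every j ∈ ℤ, the function ξ ↦ ξ₂^{i+k} · (∂^i X/∂ξ₂^i)(ξ) is square-integrable on Π^{(j)}, and, for i ≥ 1, so is the function ξ ↦ ξ₂^{i+k} · (∂^i X/∂ξ₁ ∂ξ₂^{i−1})(ξ). (The weighted ξ₂-derivatives of the boundary-layer function X belong to L₂(Π^{(j)}).) -/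
/-! For `ξ₂ > 0`, `X = Re F(ξ₁ + i ξ₂)` with `F z = log (1 - e^{2iz})` holomorphic on the upper
half-plane, so each derivative of `X` in the statement is `Re (iᵐ F⁽ⁿ⁾(z))`. Cauchy's estimate on
the disc of radius `ξ₂ / 2` about `z`, with `‖log (1 - q)‖ ≤ -log (1 - ‖q‖)`, gives
`ξ₂ⁿ ‖F⁽ⁿ⁾(z)‖ ≤ n! 2ⁿ (-log (1 - e^{-ξ₂}))`. Hence the weighted derivatives are dominated by
`ξ₂ᵏ (-log (1 - e^{-ξ₂}))`, which has a logarithmic singularity at `0` and decays like `e^{-ξ₂}`,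
so it is square integrable on `(0, ∞)`; the half-strip has finite width. -/

open MeasureTheory

/-- The half-strip `Π^{(j)} = {ξ : |ξ₁ − π j| < π/2, ξ₂ > 0}`. -/
def halfStrip (j : ℤ) : Set (ℝ × ℝ) :=
  {ξ | |ξ.1 - Real.pi * j| < Real.pi / 2 ∧ 0 < ξ.2}

open Complex Set Filter
open UpperHalfPlane (upperHalfPlaneSet isOpen_upperHalfPlaneSet)

noncomputable def boundaryLayerLog (z : ℂ) : ℂ := log (1 - exp (2 * I * z))

lemma Complex.norm_log_one_sub_le {q : ℂ} (hq : ‖q‖ < 1) :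
    ‖log (1 - q)‖ ≤ -Real.log (1 - ‖q‖) := by
  rw [← norm_neg]
  refine (hasSum_taylorSeries_neg_log' hq).norm_le_of_bounded
    (Real.hasSum_pow_div_log_of_abs_lt_one (by rwa [abs_norm])) fun n => ?_
  rw [norm_div, norm_pow]
  norm_cast

lemma norm_exp_two_I_mul (z : ℂ) : ‖exp (2 * I * z)‖ = Real.exp (-(2 * z.im)) := by
  simp [Complex.norm_exp]

lemma norm_exp_two_I_mul_lt_one {z : ℂ} (hz : 0 < z.im) : ‖exp (2 * I * z)‖ < 1 := by
  rw [norm_exp_two_I_mul, Real.exp_lt_one_iff]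
  linarith

lemma one_sub_exp_two_I_mul_mem_slitPlane {z : ℂ} (hz : 0 < z.im) :
    1 - exp (2 * I * z) ∈ slitPlane := by
  refine mem_slitPlane_iff.mpr (Or.inl ?_)
  have := (re_le_norm (exp (2 * I * z))).trans_lt (norm_exp_two_I_mul_lt_one hz)
  simp only [sub_re, one_re] at this ⊢
  linarith

lemma differentiableOn_boundaryLayerLog :
    DifferentiableOn ℂ boundaryLayerLog upperHalfPlaneSet := fun z hz =>
  ((differentiableAt_const _).sub ((differentiableAt_id.const_mul _).cexp)).clog
    (one_sub_exp_two_I_mul_mem_slitPlane (z := z) hz) |>.differentiableWithinAt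

lemma norm_boundaryLayerLog_le {w : ℂ} {s : ℝ} (hs : 0 < s) (hsw : s ≤ 2 * w.im) :
    ‖boundaryLayerLog w‖ ≤ -Real.log (1 - Real.exp (-s)) := by
  have hq : ‖exp (2 * I * w)‖ ≤ Real.exp (-s) := by
    rw [norm_exp_two_I_mul]
    exact Real.exp_le_exp.mpr (by linarith)
  have hs1 : Real.exp (-s) < 1 := Real.exp_lt_one_iff.mpr (by linarith)
  refine (norm_log_one_sub_le (hq.trans_lt hs1)).trans ?_
  gcongr

lemma im_pow_mul_norm_iteratedDeriv_boundaryLayerLog_le (n : ℕ) {z : ℂ} (hz : 0 < z.im) :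
    z.im ^ n * ‖iteratedDeriv n boundaryLayerLog z‖
      ≤ n.factorial * 2 ^ n * -Real.log (1 - Real.exp (-z.im)) := by
  have hR : 0 < z.im / 2 := by positivity
  have him {w : ℂ} (hw : dist w z ≤ z.im / 2) : z.im ≤ 2 * w.im := by
    have := (abs_im_le_norm (w - z)).trans (dist_eq_norm w z ▸ hw)
    rw [sub_im] at this
    linarith [neg_abs_le (w.im - z.im)]
  have hball : Metric.closedBall z (z.im / 2) ⊆ upperHalfPlaneSet := fun w hw => by
    have := him hw
    show 0 < w.im
    linarith
  have hcauchy := norm_iteratedDeriv_le_of_forall_mem_sphere_norm_le n hR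
    (differentiableOn_boundaryLayerLog.diffContOnCl_ball hball)
    fun w hw => norm_boundaryLayerLog_le hz (him (Metric.sphere_subset_closedBall hw))
  calc z.im ^ n * ‖iteratedDeriv n boundaryLayerLog z‖
      ≤ z.im ^ n * (n.factorial * -Real.log (1 - Real.exp (-z.im)) / (z.im / 2) ^ n) := by gcongr
    _ = n.factorial * 2 ^ n * -Real.log (1 - Real.exp (-z.im)) := by
      rw [div_pow]
      field_simp

lemma boundaryLayerX_eq_re_boundaryLayerLog (x : ℝ) {t : ℝ} (ht : 0 < t) :
    boundaryLayerX (x, t) = (boundaryLayerLog (x + t * I)).re := by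
  set z : ℂ := x + t * I
  have hz : z.im = t := by simp [z]
  have hsin : sin z = exp (-z * I) * (1 - exp (2 * I * z)) * I / 2 := by
    rw [sin, show z * I = -z * I + 2 * I * z by ring, exp_add]
    ring
  have hne : 1 - exp (2 * I * z) ≠ 0 :=
    slitPlane_ne_zero (one_sub_exp_two_I_mul_mem_slitPlane (by rw [hz]; exact ht))
  have hnorm : ‖sin z‖ = Real.exp t * ‖1 - exp (2 * I * z)‖ / 2 := by
    rw [hsin, norm_div, norm_mul, norm_mul, Complex.norm_exp, norm_I]
    simp [hz]
  rw [boundaryLayerX, boundaryLayerLog, log_re]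
  change Real.log ‖sin z‖ + Real.log 2 - t = _
  rw [hnorm, Real.log_div (by positivity) two_ne_zero,
    Real.log_mul (Real.exp_ne_zero t) (norm_ne_zero_iff.mpr hne), Real.log_exp]
  ring

lemma hasDerivAt_re_mul_comp_line {G : ℂ → ℂ} {G' : ℂ} (a b c : ℂ) {s : ℝ}
    (hG : HasDerivAt G G' (a + s * b)) :
    HasDerivAt (fun s : ℝ => (c * G (a + s * b)).re) (c * (G' * b)).re s := by
  have hline : HasDerivAt (fun s : ℝ => a + s * b) b s := by
    simpa using (ofRealCLM.hasDerivAt.mul_const b).const_add a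
  have hcomp := (hG.hasFDerivAt.restrictScalars ℝ).comp_hasDerivAt s hline
  simpa [Function.comp_def, mul_comm] using
    reCLM.hasFDerivAt.comp_hasDerivAt s (hcomp.const_mul c)

lemma DifferentiableOn.iteratedDeriv {E : Type*} [NormedAddCommGroup E] [NormedSpace ℂ E]
    [CompleteSpace E] {F : ℂ → E} {U : Set ℂ} (hU : IsOpen U)
    (hF : DifferentiableOn ℂ F U) (n : ℕ) : DifferentiableOn ℂ (iteratedDeriv n F) U := by
  induction n with
  | zero => simpa using hF
  | succ n ih => simpa [iteratedDeriv_succ] using ih.deriv hU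

lemma iteratedDeriv_re_comp_line {F : ℂ → ℂ} {U : Set ℂ} (hU : IsOpen U)
    (hF : DifferentiableOn ℂ F U) (a b : ℂ) (n : ℕ) {s : ℝ} (hs : a + s * b ∈ U) :
    iteratedDeriv n (fun s : ℝ => (F (a + s * b)).re) s
      = (b ^ n * iteratedDeriv n F (a + s * b)).re := by
  induction n generalizing s with
  | zero => simp
  | succ n ih =>
    have hline : Continuous fun s : ℝ => a + s * b := by fun_prop
    have hnhds : ∀ᶠ r : ℝ in nhds s, a + r * b ∈ U :=
      hline.continuousAt.preimage_mem_nhds (hU.mem_nhds hs)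
    have heq : iteratedDeriv n (fun s : ℝ => (F (a + s * b)).re)
        =ᶠ[nhds s] fun r : ℝ => (b ^ n * iteratedDeriv n F (a + r * b)).re :=
      hnhds.mono fun r hr => ih hr
    rw [iteratedDeriv_succ, heq.deriv_eq]
    have hG := ((hF.iteratedDeriv hU n).differentiableAt (hU.mem_nhds hs)).hasDerivAt
    rw [(hasDerivAt_re_mul_comp_line a b (b ^ n) hG).deriv, ← iteratedDeriv_succ]
    ring_nf

lemma iteratedDeriv_boundaryLayerX (n : ℕ) (x : ℝ) {t : ℝ} (ht : 0 < t) :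
    iteratedDeriv n (fun t => boundaryLayerX (x, t)) t
      = (I ^ n * iteratedDeriv n boundaryLayerLog (x + t * I)).re := by
  have hX : (fun t => boundaryLayerX (x, t))
      =ᶠ[nhds t] fun t => (boundaryLayerLog (x + t * I)).re :=
    eventually_of_mem (Ioi_mem_nhds ht) fun r hr => boundaryLayerX_eq_re_boundaryLayerLog x hr
  rw [hX.iteratedDeriv_eq]
  exact iteratedDeriv_re_comp_line isOpen_upperHalfPlaneSet differentiableOn_boundaryLayerLog
    x I n (by simpa using ht)

lemma deriv_iteratedDeriv_boundaryLayerX (n : ℕ) {t : ℝ} (ht : 0 < t) (x : ℝ) :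
    deriv (fun u => iteratedDeriv n (fun t => boundaryLayerX (u, t)) t) x
      = (I ^ n * iteratedDeriv (n + 1) boundaryLayerLog (x + t * I)).re := by
  have hline (u : ℝ) : (u : ℂ) + t * I = t * I + u * 1 := by ring
  simp_rw [iteratedDeriv_boundaryLayerX n _ ht, hline]
  have hG := ((differentiableOn_boundaryLayerLog.iteratedDeriv isOpen_upperHalfPlaneSet n)
    |>.differentiableAt (isOpen_upperHalfPlaneSet.mem_nhds (x := t * I + x * 1)
      (by simpa using ht))).hasDerivAt
  rw [(hasDerivAt_re_mul_comp_line _ 1 (I ^ n) hG).deriv, iteratedDeriv_succ, mul_one]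

lemma memLp_rpow_mul_exp_neg {a : ℝ} (ha : -(1 / 2) < a) :
    MemLp (fun t : ℝ => t ^ a * Real.exp (-t)) 2 (volume.restrict (Ioi 0)) := by
  have hmeas : AEStronglyMeasurable (fun t : ℝ => t ^ a * Real.exp (-t))
      (volume.restrict (Ioi 0)) := by
    fun_prop
  rw [memLp_two_iff_integrable_sq hmeas]
  refine (Real.GammaIntegral_convergent (s := 2 * a + 1) (by linarith)).mono' (hmeas.pow 2) ?_
  filter_upwards [ae_restrict_mem measurableSet_Ioi] with t (ht : 0 < t)
  have hsq : (t ^ a) ^ 2 = t ^ (2 * a + 1 - 1) := by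
    rw [← Real.rpow_natCast, ← Real.rpow_mul ht.le]
    ring_nf
  have hexp : Real.exp (-t) ^ 2 ≤ Real.exp (-t) :=
    pow_le_of_le_one (Real.exp_nonneg _) (Real.exp_le_one_iff.mpr (by linarith)) two_ne_zero
  rw [Real.norm_of_nonneg (by positivity), mul_pow, hsq, mul_comm]
  gcongr

lemma neg_log_one_sub_exp_neg_le_sub_log {t : ℝ} (ht : 0 < t) :
    -Real.log (1 - Real.exp (-t)) ≤ t - Real.log t := by
  have hlow : t * Real.exp (-t) ≤ 1 - Real.exp (-t) := by
    have h := Real.add_one_le_exp t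
    rw [Real.exp_neg]
    field_simp
    linarith
  have := Real.log_le_log (by positivity) hlow
  rw [Real.log_mul ht.ne' (Real.exp_ne_zero _), Real.log_exp] at this
  linarith

lemma neg_log_one_sub_le {r : ℝ} (hr : r < 1) : -Real.log (1 - r) ≤ r / (1 - r) := by
  have h := Real.one_sub_inv_le_log_of_pos (sub_pos.mpr hr)
  have hr' : r / (1 - r) = (1 - r)⁻¹ - 1 := by
    field_simp [(sub_pos.mpr hr).ne']
    ring
  linarith

lemma neg_log_le_four_mul_rpow {t : ℝ} (ht : 0 < t) : -Real.log t ≤ 4 * t ^ (-(1 / 4) : ℝ) := by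
  have h := Real.log_le_rpow_div (inv_pos.mpr ht).le (by norm_num : (0 : ℝ) < 1 / 4)
  rw [Real.log_inv, Real.inv_rpow ht.le, ← Real.rpow_neg ht.le] at h
  linarith

lemma neg_log_one_sub_exp_neg_nonneg {t : ℝ} (ht : 0 ≤ t) :
    0 ≤ -Real.log (1 - Real.exp (-t)) :=
  neg_nonneg.mpr (Real.log_nonpos (sub_nonneg.mpr (Real.exp_le_one_iff.mpr (by linarith)))
    (by linarith [Real.exp_pos (-t)]))

/-- The logarithmic singularity at `0` is dominated by `t ^ (-1/4)`. -/
lemma pow_mul_neg_log_one_sub_exp_neg_le (k : ℕ) {t : ℝ} (ht : 0 < t) :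
    t ^ k * -Real.log (1 - Real.exp (-t))
      ≤ 5 * Real.exp 1 * (t ^ (-(1 / 4) : ℝ) * Real.exp (-t))
        + 2 * (t ^ (k : ℝ) * Real.exp (-t)) := by
  have hE : Real.exp (-t) < 1 := Real.exp_lt_one_iff.mpr (by linarith)
  have hL := neg_log_one_sub_exp_neg_nonneg ht.le
  have hrpow : 0 < t ^ (-(1 / 4) : ℝ) := Real.rpow_pos_of_pos ht _
  rcases le_total t 1 with h1 | h1
  · have hrpow1 : 1 ≤ t ^ (-(1 / 4) : ℝ) :=
      Real.one_le_rpow_of_pos_of_le_one_of_nonpos ht h1 (by norm_num)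
    have hexp : 1 ≤ Real.exp 1 * Real.exp (-t) := by
      rw [← Real.exp_add]
      exact Real.one_le_exp (by linarith)
    calc t ^ k * -Real.log (1 - Real.exp (-t))
        ≤ 1 * (t + 4 * t ^ (-(1 / 4) : ℝ)) := by
          gcongr
          · exact pow_le_one₀ ht.le h1
          · linarith [neg_log_one_sub_exp_neg_le_sub_log ht, neg_log_le_four_mul_rpow ht]
      _ ≤ 5 * t ^ (-(1 / 4) : ℝ) * (Real.exp 1 * Real.exp (-t)) := by nlinarith
      _ ≤ _ := by nlinarith [Real.exp_pos (-t), Real.rpow_pos_of_pos ht (k : ℝ)]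
  · have hE2 : Real.exp (-t) ≤ 1 / 2 := by
      have he : 2 < Real.exp 1 := lt_trans (by norm_num) Real.exp_one_gt_d9
      have : Real.exp (-t) ≤ (Real.exp 1)⁻¹ := by
        rw [← Real.exp_neg]
        exact Real.exp_le_exp.mpr (by linarith)
      exact this.trans (by rw [inv_le_comm₀ (by positivity) (by norm_num)]; linarith)
    have hLle : -Real.log (1 - Real.exp (-t)) ≤ 2 * Real.exp (-t) := by
      refine (neg_log_one_sub_le hE).trans ?_
      rw [div_le_iff₀ (by linarith)]
      nlinarith [Real.exp_pos (-t)]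
    rw [Real.rpow_natCast]
    calc t ^ k * -Real.log (1 - Real.exp (-t)) ≤ t ^ k * (2 * Real.exp (-t)) := by gcongr
      _ ≤ _ := by
        have := mul_pos (mul_pos (by norm_num : (0 : ℝ) < 5) (Real.exp_pos 1))
          (mul_pos hrpow (Real.exp_pos (-t)))
        linarith

lemma memLp_pow_mul_neg_log_one_sub_exp_neg (k : ℕ) :
    MemLp (fun t : ℝ => t ^ k * -Real.log (1 - Real.exp (-t))) 2 (volume.restrict (Ioi 0)) := by
  have hk : -(1 / 2 : ℝ) < k := by linarith [k.cast_nonneg (α := ℝ)]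
  refine (((memLp_rpow_mul_exp_neg (a := -(1 / 4)) (by norm_num)).const_mul (5 * Real.exp 1)).add
    ((memLp_rpow_mul_exp_neg hk).const_mul 2)).of_le (by fun_prop) ?_
  filter_upwards [ae_restrict_mem measurableSet_Ioi] with t (ht : 0 < t)
  rw [Real.norm_of_nonneg (mul_nonneg (pow_nonneg ht.le k) (neg_log_one_sub_exp_neg_nonneg ht.le))]
  exact (pow_mul_neg_log_one_sub_exp_neg_le k ht).trans (le_abs_self _)

lemma halfStrip_eq_prod (j : ℤ) :
    halfStrip j = Ioo (Real.pi * j - Real.pi / 2) (Real.pi * j + Real.pi / 2) ×ˢ Ioi 0 := by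
  ext ⟨x, t⟩
  simp only [halfStrip, mem_ofPred_eq, mem_prod, mem_Ioo, mem_Ioi, abs_sub_lt_iff]
  constructor <;> rintro ⟨⟨h1, h2⟩, h3⟩ <;> exact ⟨⟨by linarith, by linarith⟩, h3⟩

lemma measurableSet_halfStrip (j : ℤ) : MeasurableSet (halfStrip j) := by
  rw [halfStrip_eq_prod]
  exact measurableSet_Ioo.prod measurableSet_Ioi

lemma memLp_halfStrip_of_norm_le {E : Type*} [NormedAddCommGroup E] {p : ENNReal} {j : ℤ}
    {g : ℝ × ℝ → E} {h : ℝ → ℝ} (hh : MemLp h p (volume.restrict (Ioi 0)))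
    (hg : AEStronglyMeasurable g (volume.restrict (halfStrip j)))
    (hgh : ∀ ξ ∈ halfStrip j, ‖g ξ‖ ≤ h ξ.2) :
    MemLp g p (volume.restrict (halfStrip j)) := by
  have hle : ∀ᵐ ξ ∂volume.restrict (halfStrip j), ‖g ξ‖ ≤ ‖h ξ.2‖ :=
    ae_restrict_of_forall_mem (measurableSet_halfStrip j) fun ξ hξ =>
      (hgh ξ hξ).trans (le_abs_self _)
  have : IsFiniteMeasure
      (volume.restrict (Ioo (Real.pi * j - Real.pi / 2) (Real.pi * j + Real.pi / 2))) :=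
    isFiniteMeasure_restrict.mpr measure_Ioo_lt_top.ne
  rw [halfStrip_eq_prod, Measure.volume_eq_prod, ← Measure.prod_restrict] at hg hle ⊢
  exact (hh.comp_snd _).of_le hg hle

lemma memLp_weighted_re_iteratedDeriv_boundaryLayerLog (n k : ℕ) {c : ℂ} (hc : ‖c‖ ≤ 1)
    (j : ℤ) :
    MemLp (fun ξ : ℝ × ℝ =>
        ξ.2 ^ (n + k) * (c * iteratedDeriv n boundaryLayerLog (ξ.1 + ξ.2 * I)).re) 2
      (volume.restrict (halfStrip j)) := by
  have hmeas : Measurable (iteratedDeriv n boundaryLayerLog) := by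
    cases n with
    | zero => rw [iteratedDeriv_zero]; unfold boundaryLayerLog; fun_prop
    | succ n => rw [iteratedDeriv_succ]; exact measurable_deriv _
  refine memLp_halfStrip_of_norm_le
    ((memLp_pow_mul_neg_log_one_sub_exp_neg k).const_mul (n.factorial * 2 ^ n))
    (by fun_prop) fun ⟨x, t⟩ ⟨_, (ht : 0 < t)⟩ => ?_
  have hz : ((x : ℂ) + t * I).im = t := by simp
  have hcauchy := hz ▸ im_pow_mul_norm_iteratedDeriv_boundaryLayerLog_le n
    (z := x + t * I) (by rw [hz]; exact ht)
  have hre : |(c * iteratedDeriv n boundaryLayerLog (x + t * I)).re|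
      ≤ ‖iteratedDeriv n boundaryLayerLog (x + t * I)‖ :=
    (abs_re_le_norm _).trans (by rw [norm_mul]; exact mul_le_of_le_one_left (norm_nonneg _) hc)
  calc ‖t ^ (n + k) * (c * iteratedDeriv n boundaryLayerLog (x + t * I)).re‖
      ≤ t ^ k * (t ^ n * ‖iteratedDeriv n boundaryLayerLog (x + t * I)‖) := by
        rw [norm_mul, Real.norm_of_nonneg (by positivity), Real.norm_eq_abs, pow_add,
          mul_comm (t ^ n), mul_assoc]
        gcongr
    _ ≤ t ^ k * (n.factorial * 2 ^ n * -Real.log (1 - Real.exp (-t))) := by gcongr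
    _ = _ := by ring

/-- For all integers `i, k ≥ 0` and every `j`, the function
`ξ ↦ ξ₂^{i+k} ∂^i X/∂ξ₂^i` is square-integrable on `Π^{(j)}`, and for `i ≥ 1`
so is `ξ ↦ ξ₂^{i+k} ∂^i X/∂ξ₁ ∂ξ₂^{i−1}`. -/
theorem boundaryLayerX_weighted_derivs_L2 (i k : ℕ) (j : ℤ) :
    MemLp (fun ξ : ℝ × ℝ =>
        ξ.2 ^ (i + k) * iteratedDeriv i (fun t => boundaryLayerX (ξ.1, t)) ξ.2) 2
      (volume.restrict (halfStrip j)) ∧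
    (1 ≤ i → MemLp (fun ξ : ℝ × ℝ =>
        ξ.2 ^ (i + k) *
          deriv (fun u => iteratedDeriv (i - 1) (fun t => boundaryLayerX (u, t)) ξ.2) ξ.1) 2
      (volume.restrict (halfStrip j))) := by
  have hI (n : ℕ) : ‖I ^ n‖ ≤ 1 := by simp
  refine ⟨?_, fun hi => ?_⟩
  · refine (memLp_weighted_re_iteratedDeriv_boundaryLayerLog i k (hI i) j).ae_eq ?_
    filter_upwards [ae_restrict_mem (measurableSet_halfStrip j)] with ξ hξ
    rw [iteratedDeriv_boundaryLayerX i ξ.1 hξ.2]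
  · obtain ⟨n, rfl⟩ := Nat.exists_eq_add_of_le' hi
    refine (memLp_weighted_re_iteratedDeriv_boundaryLayerLog (n + 1) k (hI n) j).ae_eq ?_
    filter_upwards [ae_restrict_mem (measurableSet_halfStrip j)] with ξ hξ
    rw [Nat.add_sub_cancel, deriv_iteratedDeriv_boundaryLayerX n hξ.2]
end

section
/- For all complex numbers w, u with |w| ≥ 1 and u² = w² − 1, one has |w + u| · |w − u| = 1 (hence log min(|w+u|, |w−u|) = − log max(|w+u|, |w−u|)), and |log(max(|w + u|, |w − u|)) − log(2|w|)| ≤ 1/|w|². (This is the key estimate behind the asymptotics (2.26) of the inner-expansion function Y^{(j)}(ς) = Re ln(y + √(y² − 1)): at infinity Y^{(j)} = ln|ς| + ln 2 − ln(α^j + β^j) + O(|ς|^{−2}) up to the dipole term.) -/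
/-! With `u² = w² − 1` the two numbers `w ± u` have product `1`, so the larger modulus `M`
determines the smaller one as `M⁻¹`. The triangle inequality applied to `2w = (w + u) + (w − u)`
traps `2|w|` between `M − M⁻¹` and `M + M⁻¹`, and `log x ≤ x − 1` turns this into the
logarithmic estimate. -/

open Real

section NormedGroup

variable {E : Type*} [SeminormedAddCommGroup E]

theorem abs_norm_add_sub_norm_sub_le (x y : E) : |‖x + y‖ - ‖x - y‖| ≤ ‖x + x‖ := by
  have h := abs_norm_sub_norm_le (x + y) (y - x)
  rwa [norm_sub_rev y x, show x + y - (y - x) = x + x by abel] at h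

theorem norm_add_self_le (x y : E) : ‖x + x‖ ≤ ‖x + y‖ + ‖x - y‖ := by
  simpa [add_add_sub_cancel] using norm_add_le (x + y) (x - y)

end NormedGroup

theorem norm_add_mul_norm_sub_eq_one {𝕜 : Type*} [NormedField 𝕜] {w u : 𝕜}
    (hu : u ^ 2 = w ^ 2 - 1) : ‖w + u‖ * ‖w - u‖ = 1 := by
  rw [← norm_mul, show (w + u) * (w - u) = w ^ 2 - u ^ 2 by ring, hu, sub_sub_cancel, norm_one]

theorem min_eq_inv_max_of_mul_eq_one {a b : ℝ} (h : a * b = 1) : min a b = (max a b)⁻¹ :=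
  eq_inv_of_mul_eq_one_left ((min_mul_max a b).trans h)

theorem one_le_max_of_mul_eq_one {a b : ℝ} (ha : 0 ≤ a) (h : a * b = 1) :
    1 ≤ max a b := by
  have hM : 0 ≤ max a b := ha.trans (le_max_left a b)
  have hmM : min a b * max a b = 1 := (min_mul_max a b).trans h
  nlinarith [min_le_max (a := a) (b := b)]

theorem abs_log_sub_log_le_inv_sq {M W : ℝ} (hM : 1 ≤ M) (hW : 0 ≤ W)
    (hlow : M - M⁻¹ ≤ 2 * W) (hup : 2 * W ≤ M + M⁻¹) :
    |log M - log (2 * W)| ≤ 1 / W ^ 2 := by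
  have hM0 : 0 < M := one_pos.trans_le hM
  rcases hW.eq_or_lt with rfl | hW
  · have : M = 1 := le_antisymm (by nlinarith [mul_inv_cancel₀ hM0.ne']) hM
    simp [this]
  have hWM : W ≤ M := by nlinarith [inv_le_one_of_one_le₀ hM]
  rw [abs_le]
  constructor
  · have hlog := log_le_sub_one_of_pos (show 0 < 2 * W / M by positivity)
    rw [log_div (by positivity) hM0.ne'] at hlog
    suffices 2 * W / M - 1 ≤ 1 / W ^ 2 by linarith
    calc 2 * W / M - 1 ≤ 1 / M ^ 2 := by
          rw [div_sub_one hM0.ne', div_le_div_iff₀ hM0 (by positivity)]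
          nlinarith [mul_inv_cancel₀ hM0.ne']
      _ ≤ 1 / W ^ 2 := by gcongr
  · have hlog := log_le_sub_one_of_pos (show 0 < M / (2 * W) by positivity)
    rw [log_div hM0.ne' (by positivity)] at hlog
    suffices M / (2 * W) - 1 ≤ 1 / W ^ 2 by linarith
    calc M / (2 * W) - 1 ≤ M⁻¹ / (2 * W) := by
          rw [div_sub_one (by positivity)]; gcongr; linarith
      _ ≤ W⁻¹ / W := by gcongr; linarith
      _ = 1 / W ^ 2 := by field_simp

theorem sqrt_branch_log_estimate_general (w u : ℂ)
    (hu : u ^ 2 = w ^ 2 - 1) :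
    ‖w + u‖ * ‖w - u‖ = 1 ∧
    Real.log (min (‖w + u‖) (‖w - u‖))
      = - Real.log (max (‖w + u‖) (‖w - u‖)) ∧
    |Real.log (max (‖w + u‖) (‖w - u‖)) -
        Real.log (2 * ‖w‖)|
      ≤ 1 / (‖w‖) ^ 2 := by
  have hprod := norm_add_mul_norm_sub_eq_one hu
  have hmin := min_eq_inv_max_of_mul_eq_one hprod
  have hmax := one_le_max_of_mul_eq_one (norm_nonneg _) hprod
  have htwo : ‖w + w‖ = 2 * ‖w‖ := by rw [← two_mul, norm_mul, Complex.norm_two]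
  refine ⟨hprod, by rw [hmin, log_inv], abs_log_sub_log_le_inv_sq hmax (norm_nonneg w) ?_ ?_⟩
  · rw [← hmin, max_sub_min_eq_abs', ← htwo]
    exact abs_norm_add_sub_norm_sub_le w u
  · rw [← hmin, add_comm, min_add_max, ← htwo]
    exact norm_add_self_le w u

/-- For `|w| ≥ 1` and `u² = w² − 1` one has `|w + u| |w − u| = 1` (hence
`log min(|w+u|, |w−u|) = − log max(|w+u|, |w−u|)`), and
`|log max(|w+u|, |w−u|) − log(2|w|)| ≤ 1/|w|²`. -/
theorem sqrt_branch_log_estimate (w u : ℂ) (hw : 1 ≤ ‖w‖)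
    (hu : u ^ 2 = w ^ 2 - 1) :
    ‖w + u‖ * ‖w - u‖ = 1 ∧
    Real.log (min (‖w + u‖) (‖w - u‖))
      = - Real.log (max (‖w + u‖) (‖w - u‖)) ∧
    |Real.log (max (‖w + u‖) (‖w - u‖)) -
        Real.log (2 * ‖w‖)|
      ≤ 1 / (‖w‖) ^ 2 :=
  sqrt_branch_log_estimate_general w u hu
end

section
/- Let m ≥ 3 be an integer, let a < b and R > 0, and let v : ℝ² → ℝ be continuously differentiable on (a, b) × (0, ∞) with v(ξ₁, t) → 0 as t → +∞ for each ξ₁ ∈ (a, b). Then ∫_{(a,b)×(R,∞)} v(ξ)² dξ ≤ (2m−3)^{−1} (2m−4)^{−1} R^{−2(m−2)} ∫_{(a,b)×(R,∞)} ξ₂^{2m−2} (∂v/∂ξ₂(ξ))² dξ. (This is the integrated decay estimate established in the proof of Lemma 5.4, bounding the L₂ norm of a decaying function on the part of the half-strip above height R by a negative power of R times a weighted L₂ norm of its vertical derivative.) -/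
open MeasureTheory Set Filter Topology
open scoped ENNReal

/-! Fix `ξ₁` and put `g = v(ξ₁, ·)`, `p = 2m - 2`. Since `g → 0`, `g s = -∫_s^∞ g'`, and
Cauchy–Schwarz with the weights `t^{-p/2}`, `t^{p/2}` gives
`g(s)² ≤ s^{1-p}/(p-1) · ∫_s^∞ t^p g'(t)² dt`. Integrating in `s > R` produces the factor
`R^{2-p}/((p-1)(p-2))`, and Tonelli integrates the result over `ξ₁ ∈ (a, b)`. -/

theorem ENNReal.sq_lintegral_mul_le {α : Type*} [MeasurableSpace α] (μ : Measure α)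
    {f g : α → ℝ≥0∞} (hf : AEMeasurable f μ) (hg : AEMeasurable g μ) :
    (∫⁻ a, f a * g a ∂μ) ^ 2 ≤ (∫⁻ a, f a ^ 2 ∂μ) * ∫⁻ a, g a ^ 2 ∂μ := by
  have holder := ENNReal.lintegral_mul_le_Lp_mul_Lq μ Real.HolderConjugate.two_two hf hg
  simp only [ENNReal.rpow_two, Pi.mul_apply, one_div] at holder
  calc (∫⁻ a, f a * g a ∂μ) ^ 2
      ≤ ((∫⁻ a, f a ^ 2 ∂μ) ^ (2⁻¹ : ℝ) * (∫⁻ a, g a ^ 2 ∂μ) ^ (2⁻¹ : ℝ)) ^ (2 : ℝ) := by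
        rw [ENNReal.rpow_two]; exact pow_le_pow_left' holder 2
    _ = (∫⁻ a, f a ^ 2 ∂μ) * ∫⁻ a, g a ^ 2 ∂μ := by
        rw [ENNReal.mul_rpow_of_nonneg _ _ zero_le_two, ENNReal.rpow_inv_rpow two_ne_zero,
          ENNReal.rpow_inv_rpow two_ne_zero]

theorem lintegral_Ioi_rpow_neg {p s : ℝ} (hp : 1 < p) (hs : 0 < s) :
    ∫⁻ t in Ioi s, ENNReal.ofReal (t ^ (-p)) = ENNReal.ofReal (s ^ (1 - p) / (p - 1)) := by
  have hnonneg : 0 ≤ᵐ[volume.restrict (Ioi s)] fun t : ℝ => t ^ (-p) :=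
    ae_restrict_of_forall_mem measurableSet_Ioi fun t ht => Real.rpow_nonneg (hs.trans ht).le _
  rw [← ofReal_integral_eq_lintegral_ofReal
      (integrableOn_Ioi_rpow_of_lt (by linarith) hs) hnonneg,
    integral_Ioi_rpow_of_lt (by linarith) hs, show -p + 1 = 1 - p by ring,
    show p - 1 = -(1 - p) by ring, div_neg, neg_div]

theorem sq_lintegral_enorm_le_weighted {p s : ℝ} (hp : 1 < p) (hs : 0 < s) {f : ℝ → ℝ}
    (hf : Measurable f) :
    (∫⁻ t in Ioi s, ‖f t‖ₑ) ^ 2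
      ≤ ENNReal.ofReal (s ^ (1 - p) / (p - 1)) * ∫⁻ t in Ioi s, ENNReal.ofReal (t ^ p * f t ^ 2) := by
  have hsplit : ∀ t ∈ Ioi s,
      ‖f t‖ₑ = ENNReal.ofReal (t ^ (-(p / 2))) * ENNReal.ofReal (t ^ (p / 2) * |f t|) := by
    intro t ht
    have ht0 : 0 < t := hs.trans ht
    rw [Real.enorm_eq_ofReal_abs, ← ENNReal.ofReal_mul (Real.rpow_nonneg ht0.le _), ← mul_assoc,
      ← Real.rpow_add ht0, neg_add_cancel, Real.rpow_zero, one_mul]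
  have hsq : ∀ t ∈ Ioi s, ∀ q : ℝ, (t ^ (q / 2)) ^ 2 = t ^ q := by
    intro t ht q
    rw [← Real.rpow_mul_natCast (hs.trans ht).le]
    norm_num
  calc (∫⁻ t in Ioi s, ‖f t‖ₑ) ^ 2
      = (∫⁻ t in Ioi s,
          ENNReal.ofReal (t ^ (-(p / 2))) * ENNReal.ofReal (t ^ (p / 2) * |f t|)) ^ 2 := by
        rw [setLIntegral_congr_fun measurableSet_Ioi hsplit]
    _ ≤ (∫⁻ t in Ioi s, ENNReal.ofReal (t ^ (-(p / 2))) ^ 2)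
          * ∫⁻ t in Ioi s, ENNReal.ofReal (t ^ (p / 2) * |f t|) ^ 2 :=
        ENNReal.sq_lintegral_mul_le _ (by fun_prop) (by fun_prop)
    _ = ENNReal.ofReal (s ^ (1 - p) / (p - 1)) *
          ∫⁻ t in Ioi s, ENNReal.ofReal (t ^ p * f t ^ 2) := by
        rw [← lintegral_Ioi_rpow_neg hp hs]
        congr 1 <;> refine setLIntegral_congr_fun measurableSet_Ioi fun t ht => ?_
        · rw [← ENNReal.ofReal_pow (Real.rpow_nonneg (hs.trans ht).le _), ← neg_div, hsq t ht]
        · rw [← ENNReal.ofReal_pow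
            (mul_nonneg (Real.rpow_nonneg (hs.trans ht).le _) (abs_nonneg _)),
            mul_pow, hsq t ht, sq_abs]

theorem enorm_le_lintegral_enorm_deriv {g : ℝ → ℝ} {s : ℝ}
    (hg : ∀ t ∈ Ici s, DifferentiableAt ℝ g t) (hlim : Tendsto g atTop (𝓝 0)) :
    ‖g s‖ₑ ≤ ∫⁻ t in Ioi s, ‖deriv g t‖ₑ := by
  by_cases hfin : ∫⁻ t in Ioi s, ‖deriv g t‖ₑ = ∞
  · simp [hfin]
  have hint : IntegrableOn (deriv g) (Ioi s) :=
    ⟨(measurable_deriv g).aestronglyMeasurable, lt_top_iff_ne_top.2 hfin⟩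
  have hftc := integral_Ioi_of_hasDerivAt_of_tendsto' (fun t ht => (hg t ht).hasDerivAt) hint hlim
  calc ‖g s‖ₑ = ‖∫ t in Ioi s, deriv g t‖ₑ := by rw [hftc, zero_sub, enorm_neg]
    _ ≤ ∫⁻ t in Ioi s, ‖deriv g t‖ₑ := enorm_integral_le_lintegral_enorm _

theorem ofReal_sq_le_lintegral_weighted_deriv {p s : ℝ} (hp : 1 < p) (hs : 0 < s) {g : ℝ → ℝ}
    (hg : ∀ t ∈ Ici s, DifferentiableAt ℝ g t) (hlim : Tendsto g atTop (𝓝 0)) :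
    ENNReal.ofReal (g s ^ 2)
      ≤ ENNReal.ofReal (s ^ (1 - p) / (p - 1)) *
          ∫⁻ t in Ioi s, ENNReal.ofReal (t ^ p * deriv g t ^ 2) :=
  calc ENNReal.ofReal (g s ^ 2) = ‖g s‖ₑ ^ 2 := by
        rw [Real.enorm_eq_ofReal_abs, ← ENNReal.ofReal_pow (abs_nonneg _), sq_abs]
    _ ≤ (∫⁻ t in Ioi s, ‖deriv g t‖ₑ) ^ 2 :=
        pow_le_pow_left' (enorm_le_lintegral_enorm_deriv hg hlim) 2
    _ ≤ _ := sq_lintegral_enorm_le_weighted hp hs (measurable_deriv g)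

theorem lintegral_sq_le_of_tendsto_zero {p R : ℝ} (hp : 2 < p) (hR : 0 < R) {g : ℝ → ℝ}
    (hg : ∀ t ∈ Ioi R, DifferentiableAt ℝ g t) (hlim : Tendsto g atTop (𝓝 0)) :
    ∫⁻ s in Ioi R, ENNReal.ofReal (g s ^ 2)
      ≤ ENNReal.ofReal ((p - 1)⁻¹ * (p - 2)⁻¹ * R ^ (-(p - 2))) *
          ∫⁻ t in Ioi R, ENNReal.ofReal (t ^ p * deriv g t ^ 2) := by
  set J := ∫⁻ t in Ioi R, ENNReal.ofReal (t ^ p * deriv g t ^ 2)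
  have hsplit : ∀ s : ℝ, ENNReal.ofReal (s ^ (1 - p) / (p - 1))
      = ENNReal.ofReal (s ^ (-(p - 1))) * ENNReal.ofReal (p - 1)⁻¹ := by
    intro s
    rw [← ENNReal.ofReal_mul' (inv_nonneg.2 (by linarith)), neg_sub, div_eq_mul_inv]
  calc ∫⁻ s in Ioi R, ENNReal.ofReal (g s ^ 2)
      ≤ ∫⁻ s in Ioi R, ENNReal.ofReal (s ^ (1 - p) / (p - 1)) * J :=
        setLIntegral_mono' measurableSet_Ioi fun s hs =>
          (ofReal_sq_le_lintegral_weighted_deriv (p := p) (by linarith) (hR.trans hs)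
              (fun t ht => hg t (Ici_subset_Ioi.2 hs ht)) hlim).trans
            (by gcongr; exact lintegral_mono_set (Ioi_subset_Ioi (mem_Ioi.1 hs).le))
    _ = (∫⁻ s in Ioi R, ENNReal.ofReal (s ^ (-(p - 1)))) * ENNReal.ofReal (p - 1)⁻¹ * J := by
        simp_rw [hsplit]
        rw [lintegral_mul_const _ (by fun_prop), lintegral_mul_const _ (by fun_prop)]
    _ = ENNReal.ofReal ((p - 1)⁻¹ * (p - 2)⁻¹ * R ^ (-(p - 2))) * J := by
        rw [lintegral_Ioi_rpow_neg (by linarith) hR,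
          ← ENNReal.ofReal_mul (div_nonneg (Real.rpow_nonneg hR.le _) (by linarith))]
        congr 2
        rw [show 1 - (p - 1) = -(p - 2) by ring, show p - 1 - 1 = p - 2 by ring]
        ring

theorem aemeasurable_deriv_snd {μ : Measure (ℝ × ℝ)} {v : ℝ × ℝ → ℝ} {s : Set (ℝ × ℝ)}
    (hs : MeasurableSet s) (hv : ∀ ξ ∈ s, DifferentiableAt ℝ v ξ) :
    AEMeasurable (fun ξ : ℝ × ℝ => deriv (fun t => v (ξ.1, t)) ξ.2) (μ.restrict s) :=
  -- on `s` it agrees with the jointly measurable `ξ ↦ Dv(ξ) (0, 1)`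
  (measurable_fderiv_apply_const ℝ v ((0 : ℝ), (1 : ℝ))).aemeasurable.congr <|
    ae_restrict_of_forall_mem hs fun ξ hξ =>
      ((hv ξ hξ).hasFDerivAt.comp_hasDerivAt ξ.2
        ((hasDerivAt_const ξ.2 ξ.1).prodMk (hasDerivAt_id ξ.2))).deriv.symm

theorem integrated_decay_estimate_general (m : ℕ) (hm : 3 ≤ m) (a b R : ℝ)
    (hR : 0 < R) (v : ℝ × ℝ → ℝ)
    (hv : ContDiffOn ℝ 1 v (Set.Ioo a b ×ˢ Set.Ioi (0 : ℝ)))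
    (hlim : ∀ ξ₁ ∈ Set.Ioo a b,
      Filter.Tendsto (fun t => v (ξ₁, t)) Filter.atTop (nhds 0)) :
    ∫⁻ ξ in Set.Ioo a b ×ˢ Set.Ioi R, ENNReal.ofReal ((v ξ) ^ 2)
      ≤ ENNReal.ofReal
          ((2 * (m : ℝ) - 3)⁻¹ * (2 * (m : ℝ) - 4)⁻¹ * R ^ (-(2 : ℝ) * ((m : ℝ) - 2))) *
        ∫⁻ ξ in Set.Ioo a b ×ˢ Set.Ioi R,
          ENNReal.ofReal (ξ.2 ^ (2 * m - 2) * (deriv (fun t => v (ξ.1, t)) ξ.2) ^ 2) := by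
  have hsub : Ioo a b ×ˢ Ioi R ⊆ Ioo a b ×ˢ Ioi (0 : ℝ) := prod_mono_right (Ioi_subset_Ioi hR.le)
  have hS : MeasurableSet (Ioo a b ×ˢ Ioi R) := measurableSet_Ioo.prod measurableSet_Ioi
  have hdiff : ∀ ξ ∈ Ioo a b ×ˢ Ioi R, DifferentiableAt ℝ v ξ := fun ξ hξ =>
    (hv.differentiableOn one_ne_zero).differentiableAt
      ((isOpen_Ioo.prod isOpen_Ioi).mem_nhds (hsub hξ))
  have hL : AEMeasurable (fun ξ => ENNReal.ofReal (v ξ ^ 2))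
      (volume.restrict (Ioo a b ×ˢ Ioi R)) :=
    (((hv.continuousOn.mono hsub).pow 2).aemeasurable hS).ennreal_ofReal
  have hW : AEMeasurable
      (fun ξ : ℝ × ℝ =>
        ENNReal.ofReal (ξ.2 ^ (2 * m - 2) * (deriv (fun t => v (ξ.1, t)) ξ.2) ^ 2))
      (volume.restrict (Ioo a b ×ˢ Ioi R)) :=
    ((measurable_snd.pow_const _).aemeasurable.mul
      ((aemeasurable_deriv_snd hS hdiff).pow_const 2)).ennreal_ofReal
  have hm' : (3 : ℝ) ≤ m := by exact_mod_cast hm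
  have hcast : ((2 * m - 2 : ℕ) : ℝ) = 2 * m - 2 := by
    push_cast [Nat.cast_sub (by omega : 2 ≤ 2 * m)]; ring
  rw [Measure.volume_eq_prod, setLIntegral_prod _ hL, setLIntegral_prod _ hW,
    ← lintegral_const_mul' _ _ ENNReal.ofReal_ne_top]
  refine setLIntegral_mono' measurableSet_Ioo fun x hx => ?_
  have hslice := lintegral_sq_le_of_tendsto_zero (p := ((2 * m - 2 : ℕ) : ℝ))
    (g := fun t => v (x, t)) (by rw [hcast]; linarith) hR
    (fun t ht => (hdiff (x, t) ⟨hx, ht⟩).comp t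
      ((differentiableAt_const x).prodMk differentiableAt_id)) (hlim x hx)
  simp only [Real.rpow_natCast] at hslice
  rw [hcast] at hslice
  convert hslice using 5 <;> ring

/-- Integrated decay estimate from the proof of Lemma 5.4: for a `C¹` function on the
half-strip decaying at `+∞`, the `L₂` norm on the part above height `R` is bounded by
`(2m−3)^{−1}(2m−4)^{−1} R^{−2(m−2)}` times a weighted `L₂` norm of the vertical derivative
(the inequality is stated for the lower Lebesgue integral, so it holds trivially if the
right-hand side is infinite). -/
theorem integrated_decay_estimate (m : ℕ) (hm : 3 ≤ m) (a b R : ℝ)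
    (hab : a < b) (hR : 0 < R) (v : ℝ × ℝ → ℝ)
    (hv : ContDiffOn ℝ 1 v (Set.Ioo a b ×ˢ Set.Ioi (0 : ℝ)))
    (hlim : ∀ ξ₁ ∈ Set.Ioo a b,
      Filter.Tendsto (fun t => v (ξ₁, t)) Filter.atTop (nhds 0)) :
    ∫⁻ ξ in Set.Ioo a b ×ˢ Set.Ioi R, ENNReal.ofReal ((v ξ) ^ 2)
      ≤ ENNReal.ofReal
          ((2 * (m : ℝ) - 3)⁻¹ * (2 * (m : ℝ) - 4)⁻¹ * R ^ (-(2 : ℝ) * ((m : ℝ) - 2))) *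
        ∫⁻ ξ in Set.Ioo a b ×ˢ Set.Ioi R,
          ENNReal.ofReal (ξ.2 ^ (2 * m - 2) * (deriv (fun t => v (ξ.1, t)) ξ.2) ^ 2) :=
  integrated_decay_estimate_general m hm a b R hR v hv hlim
end

section
/- Let f : ℝ² → ℝ be twice continuously differentiable on the open upper half-plane {ξ₂ > 0} and harmonic there (∂²f/∂ξ₁² + ∂²f/∂ξ₂² = 0), and suppose there exist C > 0 and α > 0 such that |f(ξ)|, |∇f(ξ)| and all second partial derivatives of f at ξ are bounded by C e^{−α ξ₂} for all ξ with ξ₂ > 0. Then the function F(ξ₁, ξ₂) = −(ξ₂/2) ∫_{ξ₂}^∞ f(ξ₁, t) dt is twice continuously differentiable on the open upper half-plane and satisfies ∂²F/∂ξ₁² + ∂²F/∂ξ₂² = f there. (This is the construction used for the boundary-layer corrector X_η¹ in the proof of Lemma 5.2, and for the analogous terms ∫_{ξ₂}^∞ t X(ξ₁,t) dt in the boundary layer of Theorem 1.1.) -/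
/-
Write `Φ ξ = ∫_{ξ₂}^∞ f (ξ₁, t) dt = ∫_0^∞ f (ξ + (0, s)) ds`. The exponential decay of `f` and
of its first two derivatives lets one differentiate twice under the integral sign in the second
form, so `Φ` is `C²` with `DᵏΦ ξ = ∫_{ξ₂}^∞ Dᵏf (ξ₁, t) dt`; in particular
`ΔΦ ξ = ∫_{ξ₂}^∞ Δf (ξ₁, t) dt = 0`, while `∂₂Φ = -f` by the fundamental theorem of calculus.
The product rule then gives `Δ(-(ξ₂ / 2) Φ) = -(ξ₂ / 2) ΔΦ - ∂₂Φ = f`.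
-/

open MeasureTheory Set Filter Topology

noncomputable section

section Partials

variable {E : Type*} [NormedAddCommGroup E] [NormedSpace ℝ E] {g g₁ g₂ : ℝ × ℝ → E}
  {x : ℝ × ℝ}

theorem ContinuousLinearMap.opNorm_le_norm_apply_one_zero_add_norm_apply_zero_one
    (L : ℝ × ℝ →L[ℝ] E) : ‖L‖ ≤ ‖L (1, 0)‖ + ‖L (0, 1)‖ := by
  refine L.opNorm_le_bound (by positivity) fun v => ?_
  have hv : v = v.1 • ((1 : ℝ), (0 : ℝ)) + v.2 • ((0 : ℝ), (1 : ℝ)) := by ext <;> simp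
  calc ‖L v‖ = ‖v.1 • L (1, 0) + v.2 • L (0, 1)‖ := by
        conv_lhs => rw [hv]
        rw [map_add, map_smul, map_smul]
    _ ≤ ‖v‖ * ‖L (1, 0)‖ + ‖v‖ * ‖L (0, 1)‖ := by
      refine (norm_add_le _ _).trans ?_
      rw [norm_smul, norm_smul]
      gcongr
      exacts [_root_.norm_fst_le v, _root_.norm_snd_le v]
    _ = (‖L (1, 0)‖ + ‖L (0, 1)‖) * ‖v‖ := by ring

def partialFst (g : ℝ × ℝ → E) (x : ℝ × ℝ) : E := deriv (fun u => g (u, x.2)) x.1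

def partialSnd (g : ℝ × ℝ → E) (x : ℝ × ℝ) : E := deriv (fun t => g (x.1, t)) x.2

-- `ℝ × ℝ` carries the sup norm, so Mathlib's `InnerProductSpace` Laplacian does not apply here.
def planarLaplacian (g : ℝ × ℝ → E) (x : ℝ × ℝ) : E :=
  iteratedDeriv 2 (fun u => g (u, x.2)) x.1 + iteratedDeriv 2 (fun t => g (x.1, t)) x.2

theorem iteratedDeriv_two_fst_slice (g : ℝ × ℝ → E) (x : ℝ × ℝ) :
    iteratedDeriv 2 (fun u => g (u, x.2)) x.1 = partialFst (partialFst g) x := by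
  rw [iteratedDeriv_succ, iteratedDeriv_one]; rfl

theorem iteratedDeriv_two_snd_slice (g : ℝ × ℝ → E) (x : ℝ × ℝ) :
    iteratedDeriv 2 (fun t => g (x.1, t)) x.2 = partialSnd (partialSnd g) x := by
  rw [iteratedDeriv_succ, iteratedDeriv_one]; rfl

theorem planarLaplacian_eq_partials (g : ℝ × ℝ → E) (x : ℝ × ℝ) :
    planarLaplacian g x = partialFst (partialFst g) x + partialSnd (partialSnd g) x := by
  rw [planarLaplacian, iteratedDeriv_two_fst_slice, iteratedDeriv_two_snd_slice]

theorem HasFDerivAt.hasDerivAt_fst_slice {g' : ℝ × ℝ →L[ℝ] E} (h : HasFDerivAt g g' x) :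
    HasDerivAt (fun u => g (u, x.2)) (g' (1, 0)) x.1 :=
  h.comp_hasDerivAt x.1 ((hasDerivAt_id x.1).prodMk (hasDerivAt_const x.1 x.2))

theorem HasFDerivAt.hasDerivAt_snd_slice {g' : ℝ × ℝ →L[ℝ] E} (h : HasFDerivAt g g' x) :
    HasDerivAt (fun t => g (x.1, t)) (g' (0, 1)) x.2 :=
  h.comp_hasDerivAt x.2 ((hasDerivAt_const x.2 x.1).prodMk (hasDerivAt_id x.2))

theorem DifferentiableAt.partialFst_eq (h : DifferentiableAt ℝ g x) :
    partialFst g x = fderiv ℝ g x (1, 0) :=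
  h.hasFDerivAt.hasDerivAt_fst_slice.deriv

theorem DifferentiableAt.partialSnd_eq (h : DifferentiableAt ℝ g x) :
    partialSnd g x = fderiv ℝ g x (0, 1) :=
  h.hasFDerivAt.hasDerivAt_snd_slice.deriv

theorem DifferentiableAt.hasDerivAt_partialSnd (h : DifferentiableAt ℝ g x) :
    HasDerivAt (fun t => g (x.1, t)) (partialSnd g x) x.2 :=
  h.partialSnd_eq ▸ h.hasFDerivAt.hasDerivAt_snd_slice

theorem Filter.EventuallyEq.partialFst_eq (h : g₁ =ᶠ[𝓝 x] g₂) :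
    partialFst g₁ x = partialFst g₂ x :=
  (h.comp_tendsto (by fun_prop : Continuous fun u : ℝ => (u, x.2)).continuousAt).deriv_eq

theorem Filter.EventuallyEq.partialSnd_eq (h : g₁ =ᶠ[𝓝 x] g₂) :
    partialSnd g₁ x = partialSnd g₂ x :=
  (h.comp_tendsto (by fun_prop : Continuous fun t : ℝ => (x.1, t)).continuousAt).deriv_eq

theorem DifferentiableAt.partialFst_fderiv_apply (h : DifferentiableAt ℝ (fderiv ℝ g) x)
    (w : ℝ × ℝ) :
    partialFst (fun y => fderiv ℝ g y w) x = fderiv ℝ (fderiv ℝ g) x (1, 0) w :=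
  (h.hasFDerivAt.clm_apply (hasFDerivAt_const w x)).hasDerivAt_fst_slice.deriv.trans (by simp)

theorem DifferentiableAt.partialSnd_fderiv_apply (h : DifferentiableAt ℝ (fderiv ℝ g) x)
    (w : ℝ × ℝ) :
    partialSnd (fun y => fderiv ℝ g y w) x = fderiv ℝ (fderiv ℝ g) x (0, 1) w :=
  (h.hasFDerivAt.clm_apply (hasFDerivAt_const w x)).hasDerivAt_snd_slice.deriv.trans (by simp)

theorem DifferentiableAt.norm_fderiv_le (h : DifferentiableAt ℝ g x) :
    ‖fderiv ℝ g x‖ ≤ ‖partialFst g x‖ + ‖partialSnd g x‖ := by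
  rw [h.partialFst_eq, h.partialSnd_eq]
  exact ContinuousLinearMap.opNorm_le_norm_apply_one_zero_add_norm_apply_zero_one _

theorem ContDiffAt.partialFst_eventuallyEq (hg : ContDiffAt ℝ 1 g x) :
    partialFst g =ᶠ[𝓝 x] fun y => fderiv ℝ g y (1, 0) :=
  (hg.eventually (by simp)).mono fun _ hy => (hy.differentiableAt one_ne_zero).partialFst_eq

theorem ContDiffAt.partialSnd_eventuallyEq (hg : ContDiffAt ℝ 1 g x) :
    partialSnd g =ᶠ[𝓝 x] fun y => fderiv ℝ g y (0, 1) :=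
  (hg.eventually (by simp)).mono fun _ hy => (hy.differentiableAt one_ne_zero).partialSnd_eq

theorem ContDiffAt.differentiableAt_fderiv (hg : ContDiffAt ℝ 2 g x) :
    DifferentiableAt ℝ (fderiv ℝ g) x :=
  (hg.fderiv_right (m := 1) (by norm_num)).differentiableAt one_ne_zero

section SecondPartials

variable (hg : ContDiffAt ℝ 2 g x)
include hg

theorem ContDiffAt.partialFst_partialFst :
    partialFst (partialFst g) x = fderiv ℝ (fderiv ℝ g) x (1, 0) (1, 0) := by
  rw [(hg.of_le one_le_two).partialFst_eventuallyEq.partialFst_eq,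
    hg.differentiableAt_fderiv.partialFst_fderiv_apply]

theorem ContDiffAt.partialFst_partialSnd :
    partialFst (partialSnd g) x = fderiv ℝ (fderiv ℝ g) x (1, 0) (0, 1) := by
  rw [(hg.of_le one_le_two).partialSnd_eventuallyEq.partialFst_eq,
    hg.differentiableAt_fderiv.partialFst_fderiv_apply]

theorem ContDiffAt.partialSnd_partialFst :
    partialSnd (partialFst g) x = fderiv ℝ (fderiv ℝ g) x (0, 1) (1, 0) := by
  rw [(hg.of_le one_le_two).partialFst_eventuallyEq.partialSnd_eq,
    hg.differentiableAt_fderiv.partialSnd_fderiv_apply]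

theorem ContDiffAt.partialSnd_partialSnd :
    partialSnd (partialSnd g) x = fderiv ℝ (fderiv ℝ g) x (0, 1) (0, 1) := by
  rw [(hg.of_le one_le_two).partialSnd_eventuallyEq.partialSnd_eq,
    hg.differentiableAt_fderiv.partialSnd_fderiv_apply]

theorem ContDiffAt.planarLaplacian_eq_fderiv_fderiv :
    planarLaplacian g x =
      fderiv ℝ (fderiv ℝ g) x (1, 0) (1, 0) + fderiv ℝ (fderiv ℝ g) x (0, 1) (0, 1) := by
  rw [planarLaplacian_eq_partials, hg.partialFst_partialFst, hg.partialSnd_partialSnd]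

theorem ContDiffAt.differentiableAt_partialSnd : DifferentiableAt ℝ (partialSnd g) x :=
  (hg.of_le one_le_two).partialSnd_eventuallyEq.differentiableAt_iff.2 <|
    hg.differentiableAt_fderiv.clm_apply (differentiableAt_const _)

theorem ContDiffAt.norm_fderiv_fderiv_le :
    ‖fderiv ℝ (fderiv ℝ g) x‖ ≤
      ‖partialFst (partialFst g) x‖ + ‖partialFst (partialSnd g) x‖ +
        (‖partialSnd (partialFst g) x‖ + ‖partialSnd (partialSnd g) x‖) := by
  rw [hg.partialFst_partialFst, hg.partialFst_partialSnd, hg.partialSnd_partialFst,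
    hg.partialSnd_partialSnd]
  refine (ContinuousLinearMap.opNorm_le_norm_apply_one_zero_add_norm_apply_zero_one _).trans ?_
  gcongr <;> exact ContinuousLinearMap.opNorm_le_norm_apply_one_zero_add_norm_apply_zero_one _

end SecondPartials

theorem ContDiffAt.planarLaplacian_neg_half_snd_mul {φ : ℝ × ℝ → ℝ} (hφ : ContDiffAt ℝ 2 φ x) :
    planarLaplacian (fun y => -(y.2 / 2) * φ y) x =
      -(x.2 / 2) * planarLaplacian φ x - partialSnd φ x := by
  have hc (t : ℝ) : HasDerivAt (fun s : ℝ => -(s / 2)) (-(1 / 2)) t :=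
    ((hasDerivAt_id' t).div_const 2).fun_neg
  have hfst : partialFst (partialFst fun y => -(y.2 / 2) * φ y) x =
      -(x.2 / 2) * partialFst (partialFst φ) x := by
    simp only [partialFst, deriv_const_mul_field']
  have hsnd : partialSnd (fun y => -(y.2 / 2) * φ y) =ᶠ[𝓝 x]
      fun y => -(1 / 2) * φ y + -(y.2 / 2) * partialSnd φ y := by
    filter_upwards [hφ.eventually (by simp)] with y hy
    exact ((hc y.2).fun_mul (hy.differentiableAt two_ne_zero).hasDerivAt_partialSnd).deriv
  have hsnd₂ : partialSnd (fun y => -(1 / 2) * φ y + -(y.2 / 2) * partialSnd φ y) x =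
      -(1 / 2) * partialSnd φ x +
        (-(1 / 2) * partialSnd φ x + -(x.2 / 2) * partialSnd (partialSnd φ) x) :=
    (((hφ.differentiableAt two_ne_zero).hasDerivAt_partialSnd.const_mul _).fun_add
      ((hc x.2).fun_mul hφ.differentiableAt_partialSnd.hasDerivAt_partialSnd)).deriv
  rw [planarLaplacian_eq_partials, planarLaplacian_eq_partials, hfst, hsnd.partialSnd_eq, hsnd₂]
  ring

end Partials

theorem hasDerivAt_integral_Ioi {E : Type*} [NormedAddCommGroup E] [NormedSpace ℝ E]
    [CompleteSpace E] {g : ℝ → E} {a x : ℝ} (hg : IntegrableOn g (Ioi a)) (hax : a < x)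
    (hgx : ContinuousAt g x) : HasDerivAt (fun y => ∫ t in Ioi y, g t) (-g x) x := by
  have hsplit : (fun y => ∫ t in Ioi y, g t) =ᶠ[𝓝 x]
      fun y => (∫ t in Ioi a, g t) - ∫ t in a..y, g t := by
    filter_upwards [Ioi_mem_nhds hax] with y (hy : a < y)
    rw [← intervalIntegral.integral_Ioi_sub_Ioi hg hy.le, sub_sub_cancel]
  refine HasDerivAt.congr_of_eventuallyEq ?_ hsplit
  have hint : IntervalIntegrable g volume a x :=
    (intervalIntegrable_iff_integrableOn_Ioc_of_le hax.le).2 (hg.mono_set Ioc_subset_Ioi_self)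
  simpa using (intervalIntegral.integral_hasDerivAt_right hint
    ⟨Ioi a, Ioi_mem_nhds hax, hg.aestronglyMeasurable⟩ hgx).const_sub (∫ t in Ioi a, g t)

section TailIntegral

variable {E : Type*} [NormedAddCommGroup E] {g : ℝ × ℝ → E} {β : ℝ} {x : ℝ × ℝ}

abbrev upperHalfPlane : Set (ℝ × ℝ) := {x | 0 < x.2}

theorem isOpen_upperHalfPlane : IsOpen upperHalfPlane :=
  isOpen_lt continuous_const continuous_snd

def HasExpDecay (β : ℝ) (g : ℝ × ℝ → E) : Prop :=
  ∃ K, ∀ x : ℝ × ℝ, 0 < x.2 → ‖g x‖ ≤ K * Real.exp (-β * x.2)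

theorem HasExpDecay.eventually_norm_shift_le (hg : HasExpDecay β g) (hβ : 0 ≤ β)
    (hx : 0 < x.2) :
    ∃ K, ∀ᶠ y in 𝓝 x, ∀ s : ℝ, 0 < s → ‖g (y + (0, s))‖ ≤ K * Real.exp (-β * s) := by
  obtain ⟨K, hK⟩ := hg
  have hK₀ : 0 ≤ K := (mul_nonneg_iff_of_pos_right (Real.exp_pos _)).1
    ((norm_nonneg _).trans (hK (0, 1) one_pos))
  refine ⟨K * Real.exp (-β * (x.2 / 2)), ?_⟩
  filter_upwards [continuous_snd.continuousAt.eventually (lt_mem_nhds (half_lt_self hx))]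
    with y hy s hs
  calc ‖g (y + (0, s))‖ ≤ K * Real.exp (-β * (y.2 + s)) := hK _ (by simp; linarith)
    _ ≤ K * Real.exp (-β * (x.2 / 2 + s)) := by gcongr K * Real.exp ?_; nlinarith
    _ = K * Real.exp (-β * (x.2 / 2)) * Real.exp (-β * s) := by
      rw [mul_assoc, ← Real.exp_add]; ring_nf

theorem ContinuousOn.aestronglyMeasurable_shift (hg : ContinuousOn g upperHalfPlane)
    (hx : 0 < x.2) :
    AEStronglyMeasurable (fun s => g (x + (0, s))) (volume.restrict (Ioi 0)) :=
  (hg.comp (by fun_prop) fun s (hs : 0 < s) => by simp; linarith).aestronglyMeasurable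
    measurableSet_Ioi

theorem HasExpDecay.integrableOn_slice (hd : HasExpDecay β g)
    (hg : ContinuousOn g upperHalfPlane) (hβ : 0 < β) (u : ℝ) {a : ℝ} (ha : 0 ≤ a) :
    IntegrableOn (fun t => g (u, t)) (Ioi a) := by
  obtain ⟨K, hK⟩ := hd
  refine Integrable.mono' ((exp_neg_integrableOn_Ioi a hβ).const_mul K) ?_ ?_
  · exact (hg.comp (by fun_prop) fun t (ht : a < t) => ha.trans_lt ht).aestronglyMeasurable
      measurableSet_Ioi
  · filter_upwards [ae_restrict_mem measurableSet_Ioi] with t ht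
    exact hK (u, t) (ha.trans_lt ht)

variable [NormedSpace ℝ E]

theorem hasExpDecay_fderiv (hg : ∀ x : ℝ × ℝ, 0 < x.2 → DifferentiableAt ℝ g x)
    (h₁ : HasExpDecay β (partialFst g)) (h₂ : HasExpDecay β (partialSnd g)) :
    HasExpDecay β (fderiv ℝ g) := by
  obtain ⟨K₁, h₁⟩ := h₁
  obtain ⟨K₂, h₂⟩ := h₂
  exact ⟨K₁ + K₂, fun x hx =>
    (hg x hx).norm_fderiv_le.trans (by linarith [h₁ x hx, h₂ x hx])⟩

theorem hasExpDecay_fderiv_fderiv (hg : ∀ x : ℝ × ℝ, 0 < x.2 → ContDiffAt ℝ 2 g x)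
    (h₁₁ : HasExpDecay β (partialFst (partialFst g)))
    (h₁₂ : HasExpDecay β (partialFst (partialSnd g)))
    (h₂₁ : HasExpDecay β (partialSnd (partialFst g)))
    (h₂₂ : HasExpDecay β (partialSnd (partialSnd g))) :
    HasExpDecay β (fderiv ℝ (fderiv ℝ g)) := by
  obtain ⟨K₁₁, h₁₁⟩ := h₁₁
  obtain ⟨K₁₂, h₁₂⟩ := h₁₂
  obtain ⟨K₂₁, h₂₁⟩ := h₂₁
  obtain ⟨K₂₂, h₂₂⟩ := h₂₂
  exact ⟨K₁₁ + K₁₂ + (K₂₁ + K₂₂), fun x hx => (hg x hx).norm_fderiv_fderiv_le.trans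
    (by linarith [h₁₁ x hx, h₁₂ x hx, h₂₁ x hx, h₂₂ x hx])⟩

def tailIntegral (g : ℝ × ℝ → E) (x : ℝ × ℝ) : E := ∫ t in Ioi x.2, g (x.1, t)

theorem tailIntegral_eq_integral_shift (g : ℝ × ℝ → E) :
    tailIntegral g = fun x => ∫ s in Ioi 0, g (x + (0, s)) := by
  ext x
  have h := (measurePreserving_add_right volume x.2).setIntegral_preimage_emb
    (measurableEmbedding_addRight x.2) (fun t => g (x.1, t)) (Ioi x.2)
  rw [tailIntegral, ← h, show (· + x.2) ⁻¹' Ioi x.2 = Ioi 0 by ext; simp]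
  refine setIntegral_congr_fun measurableSet_Ioi fun s _ => congrArg g ?_
  ext <;> simp [add_comm]

theorem continuousOn_tailIntegral (hg : ContinuousOn g upperHalfPlane) (hd : HasExpDecay β g)
    (hβ : 0 < β) : ContinuousOn (tailIntegral g) upperHalfPlane := by
  rw [tailIntegral_eq_integral_shift]
  intro x hx
  obtain ⟨K, hK⟩ := hd.eventually_norm_shift_le hβ.le hx
  refine (continuousAt_of_dominated ?_ ?_ ((exp_neg_integrableOn_Ioi 0 hβ).const_mul K)
    ?_).continuousWithinAt
  · filter_upwards [isOpen_upperHalfPlane.mem_nhds hx] with y hy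
    exact hg.aestronglyMeasurable_shift hy
  · filter_upwards [hK] with y hy
    filter_upwards [ae_restrict_mem measurableSet_Ioi] with s hs using hy s hs
  · filter_upwards [ae_restrict_mem measurableSet_Ioi] with s (hs : 0 < s)
    have hxs : 0 < (x + (0, s)).2 := add_pos hx hs
    exact ContinuousAt.comp (f := fun y : ℝ × ℝ => y + (0, s))
      (hg.continuousAt (isOpen_upperHalfPlane.mem_nhds hxs)) (by fun_prop)

theorem hasFDerivAt_tailIntegral (hg : ContDiffOn ℝ 1 g upperHalfPlane)
    (h₀ : HasExpDecay β g) (h₁ : HasExpDecay β (fderiv ℝ g)) (hβ : 0 < β) (hx : 0 < x.2) :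
    HasFDerivAt (tailIntegral g) (tailIntegral (fderiv ℝ g) x) x := by
  have hd (y : ℝ × ℝ) (hy : 0 < y.2) : HasFDerivAt g (fderiv ℝ g y) y :=
    ((hg.differentiableOn one_ne_zero).differentiableAt
      (isOpen_upperHalfPlane.mem_nhds hy)).hasFDerivAt
  have hg₁ := hg.continuousOn_fderiv_of_isOpen isOpen_upperHalfPlane le_rfl
  obtain ⟨K₀, hK₀⟩ := h₀.eventually_norm_shift_le hβ.le hx
  obtain ⟨K₁, hK₁⟩ := h₁.eventually_norm_shift_le hβ.le hx
  obtain ⟨U, hU, hUK⟩ := (hK₁.and (isOpen_upperHalfPlane.mem_nhds hx)).exists_mem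
  rw [tailIntegral_eq_integral_shift, tailIntegral_eq_integral_shift]
  refine hasFDerivAt_integral_of_dominated_of_fderiv_le
    (F' := fun y s => fderiv ℝ g (y + (0, s))) (bound := fun s => K₁ * Real.exp (-β * s)) hU
    ?_ ?_ (hg₁.aestronglyMeasurable_shift hx) ?_ ((exp_neg_integrableOn_Ioi 0 hβ).const_mul K₁) ?_
  · filter_upwards [isOpen_upperHalfPlane.mem_nhds hx] with y hy
    exact hg.continuousOn.aestronglyMeasurable_shift hy
  · refine Integrable.mono' ((exp_neg_integrableOn_Ioi 0 hβ).const_mul K₀)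
      (hg.continuousOn.aestronglyMeasurable_shift hx) ?_
    filter_upwards [ae_restrict_mem measurableSet_Ioi] with s hs using hK₀.self_of_nhds s hs
  · filter_upwards [ae_restrict_mem measurableSet_Ioi] with s hs y hy using (hUK y hy).1 s hs
  · filter_upwards [ae_restrict_mem measurableSet_Ioi] with s (hs : 0 < s) y hy
    have hys : 0 < (y + (0, s)).2 := by simp; linarith [(hUK y hy).2]
    have := (hd _ hys).comp y ((hasFDerivAt_id y).add_const (0, s))
    rwa [ContinuousLinearMap.comp_id] at this

theorem contDiffOn_one_tailIntegral (hg : ContDiffOn ℝ 1 g upperHalfPlane)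
    (h₀ : HasExpDecay β g) (h₁ : HasExpDecay β (fderiv ℝ g)) (hβ : 0 < β) :
    ContDiffOn ℝ 1 (tailIntegral g) upperHalfPlane := by
  rw [show (1 : WithTop ℕ∞) = 0 + 1 by norm_num,
    contDiffOn_succ_iff_fderiv_of_isOpen isOpen_upperHalfPlane, contDiffOn_zero]
  refine ⟨fun x hx => (hasFDerivAt_tailIntegral hg h₀ h₁ hβ hx).differentiableAt
    |>.differentiableWithinAt, by simp, ?_⟩
  exact (continuousOn_tailIntegral (hg.continuousOn_fderiv_of_isOpen isOpen_upperHalfPlane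
    le_rfl) h₁ hβ).congr fun x hx => (hasFDerivAt_tailIntegral hg h₀ h₁ hβ hx).fderiv

theorem fderiv_tailIntegral_eventuallyEq (hg : ContDiffOn ℝ 1 g upperHalfPlane)
    (h₀ : HasExpDecay β g) (h₁ : HasExpDecay β (fderiv ℝ g)) (hβ : 0 < β) (hx : 0 < x.2) :
    fderiv ℝ (tailIntegral g) =ᶠ[𝓝 x] tailIntegral (fderiv ℝ g) := by
  filter_upwards [isOpen_upperHalfPlane.mem_nhds hx] with y hy
  exact (hasFDerivAt_tailIntegral hg h₀ h₁ hβ hy).fderiv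

section SecondOrder

variable (hg : ContDiffOn ℝ 2 g upperHalfPlane) (h₀ : HasExpDecay β g)
  (h₁ : HasExpDecay β (fderiv ℝ g)) (h₂ : HasExpDecay β (fderiv ℝ (fderiv ℝ g))) (hβ : 0 < β)
include hg h₀ h₁ h₂ hβ

theorem contDiffOn_two_tailIntegral : ContDiffOn ℝ 2 (tailIntegral g) upperHalfPlane := by
  have hg' := hg.fderiv_of_isOpen isOpen_upperHalfPlane (m := 1) le_rfl
  rw [show (2 : WithTop ℕ∞) = 1 + 1 by norm_num,
    contDiffOn_succ_iff_fderiv_of_isOpen isOpen_upperHalfPlane]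
  refine ⟨(contDiffOn_one_tailIntegral (hg.of_le one_le_two) h₀ h₁ hβ).differentiableOn
    one_ne_zero, by simp, ?_⟩
  exact (contDiffOn_one_tailIntegral hg' h₁ h₂ hβ).congr fun x hx =>
    (fderiv_tailIntegral_eventuallyEq (hg.of_le one_le_two) h₀ h₁ hβ hx).self_of_nhds

theorem fderiv_fderiv_tailIntegral (hx : 0 < x.2) :
    fderiv ℝ (fderiv ℝ (tailIntegral g)) x = tailIntegral (fderiv ℝ (fderiv ℝ g)) x := by
  rw [(fderiv_tailIntegral_eventuallyEq (hg.of_le one_le_two) h₀ h₁ hβ hx).fderiv_eq]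
  exact (hasFDerivAt_tailIntegral (hg.fderiv_of_isOpen isOpen_upperHalfPlane le_rfl)
    h₁ h₂ hβ hx).fderiv

theorem planarLaplacian_tailIntegral [CompleteSpace E] (hx : 0 < x.2) :
    planarLaplacian (tailIntegral g) x = tailIntegral (planarLaplacian g) x := by
  let Λ : (ℝ × ℝ →L[ℝ] ℝ × ℝ →L[ℝ] E) →L[ℝ] E :=
    (ContinuousLinearMap.apply ℝ E (1, 0)).comp (ContinuousLinearMap.apply ℝ _ (1, 0)) +
      (ContinuousLinearMap.apply ℝ E (0, 1)).comp (ContinuousLinearMap.apply ℝ _ (0, 1))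
  have hΛ (y : ℝ × ℝ) (hy : 0 < y.2) : planarLaplacian g y = Λ (fderiv ℝ (fderiv ℝ g) y) :=
    (hg.contDiffAt (isOpen_upperHalfPlane.mem_nhds hy)).planarLaplacian_eq_fderiv_fderiv
  have hint := h₂.integrableOn_slice ((hg.fderiv_of_isOpen isOpen_upperHalfPlane (m := 1)
    le_rfl).continuousOn_fderiv_of_isOpen isOpen_upperHalfPlane le_rfl) hβ x.1 hx.le
  rw [((contDiffOn_two_tailIntegral hg h₀ h₁ h₂ hβ).contDiffAt
      (isOpen_upperHalfPlane.mem_nhds hx)).planarLaplacian_eq_fderiv_fderiv,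
    fderiv_fderiv_tailIntegral hg h₀ h₁ h₂ hβ hx]
  refine (ContinuousLinearMap.integral_comp_comm (𝕜 := ℝ) Λ hint).symm.trans ?_
  exact setIntegral_congr_fun measurableSet_Ioi fun t (ht : x.2 < t) =>
    (hΛ (x.1, t) (hx.trans ht)).symm

end SecondOrder

theorem partialSnd_tailIntegral [CompleteSpace E] (hg : ContinuousOn g upperHalfPlane)
    (hd : HasExpDecay β g) (hβ : 0 < β) (hx : 0 < x.2) :
    partialSnd (tailIntegral g) x = -g x :=
  (hasDerivAt_integral_Ioi (hd.integrableOn_slice hg hβ x.1 le_rfl) hx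
    (ContinuousAt.comp (f := fun t : ℝ => (x.1, t))
      (hg.continuousAt (isOpen_upperHalfPlane.mem_nhds hx)) (by fun_prop))).deriv

end TailIntegral

end

theorem corrector_solves_poisson_general (f : ℝ × ℝ → ℝ) (C α : ℝ) (hα : 0 < α)
    (hf : ContDiffOn ℝ 2 f {ξ : ℝ × ℝ | 0 < ξ.2})
    (hharm : ∀ ξ : ℝ × ℝ, 0 < ξ.2 →
      iteratedDeriv 2 (fun u => f (u, ξ.2)) ξ.1 +
        iteratedDeriv 2 (fun t => f (ξ.1, t)) ξ.2 = 0)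
    (hdecay : ∀ ξ : ℝ × ℝ, 0 < ξ.2 → |f ξ| ≤ C * Real.exp (-α * ξ.2))
    (hdecay₁ : ∀ ξ : ℝ × ℝ, 0 < ξ.2 →
      |deriv (fun u => f (u, ξ.2)) ξ.1| ≤ C * Real.exp (-α * ξ.2) ∧
      |deriv (fun t => f (ξ.1, t)) ξ.2| ≤ C * Real.exp (-α * ξ.2))
    (hdecay₂ : ∀ ξ : ℝ × ℝ, 0 < ξ.2 →
      |iteratedDeriv 2 (fun u => f (u, ξ.2)) ξ.1| ≤ C * Real.exp (-α * ξ.2) ∧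
      |iteratedDeriv 2 (fun t => f (ξ.1, t)) ξ.2| ≤ C * Real.exp (-α * ξ.2) ∧
      |deriv (fun u => deriv (fun t => f (u, t)) ξ.2) ξ.1| ≤ C * Real.exp (-α * ξ.2) ∧
      |deriv (fun t => deriv (fun u => f (u, t)) ξ.1) ξ.2| ≤ C * Real.exp (-α * ξ.2)) :
    ContDiffOn ℝ 2
      (fun ξ : ℝ × ℝ => -(ξ.2 / 2) * ∫ t in Set.Ioi ξ.2, f (ξ.1, t))
      {ξ : ℝ × ℝ | 0 < ξ.2} ∧
    ∀ ξ : ℝ × ℝ, 0 < ξ.2 →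
      iteratedDeriv 2
          (fun u => -(ξ.2 / 2) * ∫ t in Set.Ioi ξ.2, f (u, t)) ξ.1 +
        iteratedDeriv 2
          (fun x₂ => -(x₂ / 2) * ∫ t in Set.Ioi x₂, f (ξ.1, t)) ξ.2 = f ξ := by
  have hf₂ (ξ : ℝ × ℝ) (hξ : 0 < ξ.2) : ContDiffAt ℝ 2 f ξ :=
    hf.contDiffAt (isOpen_upperHalfPlane.mem_nhds hξ)
  have h₀ : HasExpDecay α f := ⟨C, hdecay⟩
  have h₁ : HasExpDecay α (fderiv ℝ f) :=
    hasExpDecay_fderiv (fun ξ hξ => (hf₂ ξ hξ).differentiableAt two_ne_zero)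
      ⟨C, fun ξ hξ => (hdecay₁ ξ hξ).1⟩ ⟨C, fun ξ hξ => (hdecay₁ ξ hξ).2⟩
  have h₂ : HasExpDecay α (fderiv ℝ (fderiv ℝ f)) :=
    hasExpDecay_fderiv_fderiv hf₂
      ⟨C, fun ξ hξ => by
        simpa only [Real.norm_eq_abs, iteratedDeriv_two_fst_slice] using (hdecay₂ ξ hξ).1⟩
      ⟨C, fun ξ hξ => (hdecay₂ ξ hξ).2.2.1⟩ ⟨C, fun ξ hξ => (hdecay₂ ξ hξ).2.2.2⟩
      ⟨C, fun ξ hξ => by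
        simpa only [Real.norm_eq_abs, iteratedDeriv_two_snd_slice] using (hdecay₂ ξ hξ).2.1⟩
  have hΦ := contDiffOn_two_tailIntegral hf h₀ h₁ h₂ hα
  refine ⟨(contDiff_snd.div_const 2).neg.contDiffOn.mul hΦ, fun ξ hξ => ?_⟩
  have hΔΦ : planarLaplacian (tailIntegral f) ξ = 0 := by
    rw [planarLaplacian_tailIntegral hf h₀ h₁ h₂ hα hξ]
    exact setIntegral_eq_zero_of_forall_eq_zero fun t (ht : ξ.2 < t) => hharm _ (hξ.trans ht)
  change planarLaplacian (fun y => -(y.2 / 2) * tailIntegral f y) ξ = f ξ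
  rw [(hΦ.contDiffAt (isOpen_upperHalfPlane.mem_nhds hξ)).planarLaplacian_neg_half_snd_mul, hΔΦ,
    partialSnd_tailIntegral hf.continuousOn h₀ hα hξ]
  ring

/-- Construction of the boundary-layer corrector (cf. `X_η¹` in Lemma 5.2 and the
terms `∫_{ξ₂}^∞ t X(ξ₁,t) dt` in Theorem 1.1): if `f` is `C²`, harmonic and
exponentially decaying (with its first and second partial derivatives) on the open
upper half-plane, then `F(ξ₁, ξ₂) = −(ξ₂/2) ∫_{ξ₂}^∞ f(ξ₁, t) dt` is `C²` on the
open upper half-plane and satisfies `ΔF = f` there. -/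
theorem corrector_solves_poisson (f : ℝ × ℝ → ℝ) (C α : ℝ) (hC : 0 < C) (hα : 0 < α)
    (hf : ContDiffOn ℝ 2 f {ξ : ℝ × ℝ | 0 < ξ.2})
    (hharm : ∀ ξ : ℝ × ℝ, 0 < ξ.2 →
      iteratedDeriv 2 (fun u => f (u, ξ.2)) ξ.1 +
        iteratedDeriv 2 (fun t => f (ξ.1, t)) ξ.2 = 0)
    (hdecay : ∀ ξ : ℝ × ℝ, 0 < ξ.2 → |f ξ| ≤ C * Real.exp (-α * ξ.2))
    (hdecay₁ : ∀ ξ : ℝ × ℝ, 0 < ξ.2 →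
      |deriv (fun u => f (u, ξ.2)) ξ.1| ≤ C * Real.exp (-α * ξ.2) ∧
      |deriv (fun t => f (ξ.1, t)) ξ.2| ≤ C * Real.exp (-α * ξ.2))
    (hdecay₂ : ∀ ξ : ℝ × ℝ, 0 < ξ.2 →
      |iteratedDeriv 2 (fun u => f (u, ξ.2)) ξ.1| ≤ C * Real.exp (-α * ξ.2) ∧
      |iteratedDeriv 2 (fun t => f (ξ.1, t)) ξ.2| ≤ C * Real.exp (-α * ξ.2) ∧
      |deriv (fun u => deriv (fun t => f (u, t)) ξ.2) ξ.1| ≤ C * Real.exp (-α * ξ.2) ∧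
      |deriv (fun t => deriv (fun u => f (u, t)) ξ.1) ξ.2| ≤ C * Real.exp (-α * ξ.2)) :
    ContDiffOn ℝ 2
      (fun ξ : ℝ × ℝ => -(ξ.2 / 2) * ∫ t in Set.Ioi ξ.2, f (ξ.1, t))
      {ξ : ℝ × ℝ | 0 < ξ.2} ∧
    ∀ ξ : ℝ × ℝ, 0 < ξ.2 →
      iteratedDeriv 2
          (fun u => -(ξ.2 / 2) * ∫ t in Set.Ioi ξ.2, f (u, t)) ξ.1 +
        iteratedDeriv 2
          (fun x₂ => -(x₂ / 2) * ∫ t in Set.Ioi x₂, f (ξ.1, t)) ξ.2 = f ξ :=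
  corrector_solves_poisson_general f C α hα hf hharm hdecay hdecay₁ hdecay₂
end

section
/- Let u : ℝ² → ℝ be twice continuously differentiable on the closed upper half-plane {ξ₂ ≥ 0}, harmonic on the open upper half-plane {ξ₂ > 0}, and suppose there exist C > 0 and α > 0 such that |u(ξ)|, |∇u(ξ)| and all second partial derivatives of u at ξ are bounded by C e^{−α ξ₂} for all ξ with ξ₂ ≥ 0. Then the function g(ξ₁) = ∫_0^∞ u(ξ₁, t) dt is twice differentiable on ℝ and g''(ξ₁) = ∂u/∂ξ₂(ξ₁, 0) for every ξ₁. (This is the identity d²/dξ₁² ∫_0^∞ X_η(ξ₁, t) dt = −1 used in the proof of Lemma 5.2, where ∂X_η/∂ξ₂ = −1 on the Neumann part of the boundary.) -/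
/-!
Differentiating twice under the integral sign, with `C e^{-α t}` as integrable majorant, gives
`g'' = ∫₀^∞ ∂₁²u(ξ₁, t) dt`. Harmonicity turns the integrand into `-∂₂²u`, and the fundamental
theorem of calculus on `(0, ∞)` evaluates `-∫₀^∞ ∂₂²u(ξ₁, t) dt` to `∂₂u(ξ₁, 0)`, the boundary
term at infinity vanishing by the decay of `∇u`.
-/

open MeasureTheory Set Filter Topology Real

section ExponentialDecay

variable {E : Type*} [NormedAddCommGroup E] {C α a : ℝ}

theorem integrableOn_Ioi_of_norm_le_exp {f : ℝ → E} (hα : 0 < α)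
    (hf : ContinuousOn f (Ioi a)) (hle : ∀ t ∈ Ioi a, ‖f t‖ ≤ C * exp (-α * t)) :
    IntegrableOn f (Ioi a) :=
  ((exp_neg_integrableOn_Ioi a hα).const_mul C).mono' (hf.aestronglyMeasurable measurableSet_Ioi)
    ((ae_restrict_iff' measurableSet_Ioi).2 (.of_forall hle))

theorem tendsto_zero_of_norm_le_exp {f : ℝ → E} (hα : 0 < α)
    (hle : ∀ t ∈ Ioi a, ‖f t‖ ≤ C * exp (-α * t)) : Tendsto f atTop (𝓝 0) := by
  have hexp : Tendsto (fun t ↦ C * exp (-α * t)) atTop (𝓝 0) := by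
    simpa using (tendsto_exp_atBot.comp
      (tendsto_id.const_mul_atTop_of_neg (neg_neg_iff_pos.2 hα))).const_mul C
  exact squeeze_zero_norm' (eventually_gt_atTop a |>.mono hle) hexp

theorem integral_Ioi_of_hasDerivAt_of_norm_le_exp [NormedSpace ℝ E] [CompleteSpace E]
    {f f' : ℝ → E} (hα : 0 < α) (hcont : ContinuousWithinAt f (Ici a) a)
    (hderiv : ∀ t ∈ Ioi a, HasDerivAt f (f' t) t) (hf' : IntegrableOn f' (Ioi a))
    (hle : ∀ t ∈ Ioi a, ‖f t‖ ≤ C * exp (-α * t)) :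
    ∫ t in Ioi a, f' t = -f a := by
  rw [integral_Ioi_of_hasDerivAt_of_tendsto hcont hderiv hf' (tendsto_zero_of_norm_le_exp hα hle),
    zero_sub]

theorem hasDerivAt_integral_Ioi_of_norm_le_exp [NormedSpace ℝ E] {F F' : ℝ × ℝ → E} (hα : 0 < α)
    (hF : ContinuousOn F {ξ | 0 < ξ.2}) (hF' : ContinuousOn F' {ξ | 0 < ξ.2})
    (hF_le : ∀ ξ : ℝ × ℝ, 0 < ξ.2 → ‖F ξ‖ ≤ C * exp (-α * ξ.2))
    (hF'_le : ∀ ξ : ℝ × ℝ, 0 < ξ.2 → ‖F' ξ‖ ≤ C * exp (-α * ξ.2))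
    (h_diff : ∀ x t : ℝ, 0 < t → HasDerivAt (fun y ↦ F (y, t)) (F' (x, t)) x) (x : ℝ) :
    HasDerivAt (fun x ↦ ∫ t in Ioi 0, F (x, t)) (∫ t in Ioi 0, F' (x, t)) x := by
  have hslice {G : ℝ × ℝ → E} (hG : ContinuousOn G {ξ | 0 < ξ.2}) (x : ℝ) :
      ContinuousOn (fun t ↦ G (x, t)) (Ioi 0) :=
    hG.comp (Continuous.prodMk_right x).continuousOn fun _ ht ↦ ht
  have hae {P : ℝ → Prop} (hP : ∀ t ∈ Ioi (0 : ℝ), P t) : ∀ᵐ t ∂volume.restrict (Ioi 0), P t :=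
    (ae_restrict_iff' measurableSet_Ioi).2 (.of_forall hP)
  refine (hasDerivAt_integral_of_dominated_loc_of_deriv_le univ_mem
    (.of_forall fun y ↦ (hslice hF y).aestronglyMeasurable measurableSet_Ioi)
    (integrableOn_Ioi_of_norm_le_exp hα (hslice hF x) fun t ht ↦ hF_le (x, t) ht)
    ((hslice hF' x).aestronglyMeasurable measurableSet_Ioi)
    (hae fun t ht y _ ↦ hF'_le (y, t) ht) ((exp_neg_integrableOn_Ioi 0 hα).const_mul C)
    (hae fun t ht y _ ↦ h_diff y t ht)).2

end ExponentialDecay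

section Calculus

variable {𝕜 E F G : Type*} [NontriviallyNormedField 𝕜] [NormedAddCommGroup E]
  [NormedSpace 𝕜 E] [NormedAddCommGroup F] [NormedSpace 𝕜 F] [NormedAddCommGroup G]
  [NormedSpace 𝕜 G]

theorem HasFDerivAt.comp_prodMk_left {f : 𝕜 × 𝕜 → E} {f' : 𝕜 × 𝕜 →L[𝕜] E} {x t : 𝕜}
    (h : HasFDerivAt f f' (x, t)) : HasDerivAt (fun y ↦ f (y, t)) (f' (1, 0)) x :=
  h.comp_hasDerivAt x ((hasDerivAt_id x).prodMk (hasDerivAt_const x t))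

theorem HasFDerivAt.comp_prodMk_right {f : 𝕜 × 𝕜 → E} {f' : 𝕜 × 𝕜 →L[𝕜] E} {x t : 𝕜}
    (h : HasFDerivAt f f' (x, t)) : HasDerivAt (fun s ↦ f (x, s)) (f' (0, 1)) t :=
  h.comp_hasDerivAt t ((hasDerivAt_const t x).prodMk (hasDerivAt_id t))

theorem HasFDerivWithinAt.comp_prodMk_right {f : 𝕜 × 𝕜 → E} {f' : 𝕜 × 𝕜 →L[𝕜] E} {x t : 𝕜}
    {s : Set 𝕜} (h : HasFDerivWithinAt f f' (univ ×ˢ s) (x, t)) :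
    HasDerivWithinAt (fun r ↦ f (x, r)) (f' (0, 1)) s t :=
  h.comp_hasDerivWithinAt t ((hasDerivAt_const t x).prodMk (hasDerivAt_id t)).hasDerivWithinAt
    fun _ hs ↦ ⟨mem_univ _, hs⟩

theorem HasFDerivAt.apply_const {c : E → F →L[𝕜] G} {c' : E →L[𝕜] F →L[𝕜] G} {x : E}
    (hc : HasFDerivAt c c' x) (v : F) : HasFDerivAt (fun y ↦ c y v) (c'.flip v) x := by
  simpa using hc.clm_apply (hasFDerivAt_const v x)

theorem iteratedDeriv_two_eq_of_hasDerivAt {f f' : 𝕜 → E} {f'' : E} {x : 𝕜}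
    (hf : ∀ᶠ y in 𝓝 x, HasDerivAt f (f' y) y) (hf' : HasDerivAt f' f'' x) :
    iteratedDeriv 2 f x = f'' := by
  have hderiv : deriv f =ᶠ[𝓝 x] f' := hf.mono fun _ hy ↦ hy.deriv
  rw [iteratedDeriv_succ, iteratedDeriv_one, hderiv.deriv_eq, hf'.deriv]

theorem norm_fderivWithin_fderivWithin {f : E → F} {s : Set E} {x : E} (hs : UniqueDiffOn 𝕜 s)
    (hx : x ∈ s) :
    ‖fderivWithin 𝕜 (fderivWithin 𝕜 f s) s x‖ = ‖iteratedFDerivWithin 𝕜 2 f s x‖ := by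
  rw [← norm_iteratedFDerivWithin_fderivWithin hs hx, norm_iteratedFDerivWithin_one _ (hs x hx)]

theorem ContinuousLinearMap.unit_le_opNorm₂ (f : E →L[𝕜] F →L[𝕜] G) {v : E} {w : F}
    (hv : ‖v‖ ≤ 1) (hw : ‖w‖ ≤ 1) : ‖f v w‖ ≤ ‖f‖ :=
  ((f v).unit_le_opNorm _ hw).trans (f.unit_le_opNorm _ hv)

end Calculus

theorem norm_one_zero : ‖((1 : ℝ), (0 : ℝ))‖ = 1 := by simp

theorem norm_zero_one : ‖((0 : ℝ), (1 : ℝ))‖ = 1 := by simp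

def closedUpperHalfPlane : Set (ℝ × ℝ) := {ξ | 0 ≤ ξ.2}

theorem closedUpperHalfPlane_eq : closedUpperHalfPlane = univ ×ˢ Ici 0 := by
  ext; simp [closedUpperHalfPlane]

theorem uniqueDiffOn_closedUpperHalfPlane : UniqueDiffOn ℝ closedUpperHalfPlane :=
  closedUpperHalfPlane_eq ▸ uniqueDiffOn_univ.prod (uniqueDiffOn_Ici 0)

theorem closedUpperHalfPlane_mem_nhds {ξ : ℝ × ℝ} (h : 0 < ξ.2) : closedUpperHalfPlane ∈ 𝓝 ξ :=
  continuous_snd.continuousAt.preimage_mem_nhds (Ici_mem_nhds h)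

local notation "H₊" => closedUpperHalfPlane

section HalfPlane

variable {E : Type*} [NormedAddCommGroup E] [NormedSpace ℝ E] {u : ℝ × ℝ → E}

theorem ContDiffOn.hasFDerivAt_of_upperHalfPlane (hu : ContDiffOn ℝ 2 u H₊) {ξ : ℝ × ℝ}
    (hξ : 0 < ξ.2) : HasFDerivAt u (fderivWithin ℝ u H₊ ξ) ξ :=
  ((hu.differentiableOn two_ne_zero) ξ hξ.le).hasFDerivWithinAt.hasFDerivAt
    (closedUpperHalfPlane_mem_nhds hξ)

theorem ContDiffOn.hasFDerivAt_fderivWithin_of_upperHalfPlane (hu : ContDiffOn ℝ 2 u H₊)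
    {ξ : ℝ × ℝ} (hξ : 0 < ξ.2) :
    HasFDerivAt (fderivWithin ℝ u H₊) (fderivWithin ℝ (fderivWithin ℝ u H₊) H₊ ξ) ξ :=
  (((hu.fderivWithin uniqueDiffOn_closedUpperHalfPlane (m := 1) le_rfl).differentiableOn
    one_ne_zero) ξ hξ.le).hasFDerivWithinAt.hasFDerivAt (closedUpperHalfPlane_mem_nhds hξ)

theorem ContDiffOn.continuousOn_fderivWithin_upperHalfPlane (hu : ContDiffOn ℝ 2 u H₊)
    (v : ℝ × ℝ) :
    ContinuousOn (fun ξ ↦ fderivWithin ℝ u H₊ ξ v) H₊ :=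
  (hu.continuousOn_fderivWithin uniqueDiffOn_closedUpperHalfPlane one_le_two).clm_apply
    continuousOn_const

theorem ContDiffOn.continuousOn_fderivWithin_fderivWithin_upperHalfPlane
    (hu : ContDiffOn ℝ 2 u H₊) (v w : ℝ × ℝ) :
    ContinuousOn (fun ξ ↦ fderivWithin ℝ (fderivWithin ℝ u H₊) H₊ ξ v w) H₊ :=
  (((hu.fderivWithin uniqueDiffOn_closedUpperHalfPlane (m := 1) le_rfl).continuousOn_fderivWithin
    uniqueDiffOn_closedUpperHalfPlane le_rfl).clm_apply continuousOn_const).clm_apply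
    continuousOn_const

theorem hasDerivAt_horizontal_slice (hu : ContDiffOn ℝ 2 u H₊) (x : ℝ) {t : ℝ} (ht : 0 < t) :
    HasDerivAt (fun y ↦ u (y, t)) (fderivWithin ℝ u H₊ (x, t) (1, 0)) x :=
  (hu.hasFDerivAt_of_upperHalfPlane (ξ := (x, t)) ht).comp_prodMk_left

theorem hasDerivAt_vertical_slice (hu : ContDiffOn ℝ 2 u H₊) (x : ℝ) {t : ℝ} (ht : 0 < t) :
    HasDerivAt (fun s ↦ u (x, s)) (fderivWithin ℝ u H₊ (x, t) (0, 1)) t :=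
  (hu.hasFDerivAt_of_upperHalfPlane (ξ := (x, t)) ht).comp_prodMk_right

theorem hasDerivAt_horizontal_slice_fderivWithin (hu : ContDiffOn ℝ 2 u H₊) (x : ℝ) {t : ℝ}
    (ht : 0 < t) :
    HasDerivAt (fun y ↦ fderivWithin ℝ u H₊ (y, t) (1, 0))
      (fderivWithin ℝ (fderivWithin ℝ u H₊) H₊ (x, t) (1, 0) (1, 0)) x :=
  ((hu.hasFDerivAt_fderivWithin_of_upperHalfPlane (ξ := (x, t)) ht).apply_const _).comp_prodMk_left

theorem hasDerivAt_vertical_slice_fderivWithin (hu : ContDiffOn ℝ 2 u H₊) (x : ℝ) {t : ℝ}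
    (ht : 0 < t) :
    HasDerivAt (fun s ↦ fderivWithin ℝ u H₊ (x, s) (0, 1))
      (fderivWithin ℝ (fderivWithin ℝ u H₊) H₊ (x, t) (0, 1) (0, 1)) t :=
  ((hu.hasFDerivAt_fderivWithin_of_upperHalfPlane (ξ := (x, t)) ht).apply_const _).comp_prodMk_right

theorem iteratedDeriv_two_horizontal_slice (hu : ContDiffOn ℝ 2 u H₊) (x : ℝ) {t : ℝ}
    (ht : 0 < t) :
    iteratedDeriv 2 (fun y ↦ u (y, t)) x
      = fderivWithin ℝ (fderivWithin ℝ u H₊) H₊ (x, t) (1, 0) (1, 0) :=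
  iteratedDeriv_two_eq_of_hasDerivAt (.of_forall fun y ↦ hasDerivAt_horizontal_slice hu y ht)
    (hasDerivAt_horizontal_slice_fderivWithin hu x ht)

theorem iteratedDeriv_two_vertical_slice (hu : ContDiffOn ℝ 2 u H₊) (x : ℝ) {t : ℝ}
    (ht : 0 < t) :
    iteratedDeriv 2 (fun s ↦ u (x, s)) t
      = fderivWithin ℝ (fderivWithin ℝ u H₊) H₊ (x, t) (0, 1) (0, 1) :=
  iteratedDeriv_two_eq_of_hasDerivAt
    (eventually_gt_nhds ht |>.mono fun _ hs ↦ hasDerivAt_vertical_slice hu x hs)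
    (hasDerivAt_vertical_slice_fderivWithin hu x ht)

theorem derivWithin_vertical_slice_zero (hu : ContDiffOn ℝ 2 u H₊) (x : ℝ) :
    derivWithin (fun s ↦ u (x, s)) (Ici 0) 0 = fderivWithin ℝ u H₊ (x, 0) (0, 1) := by
  have hdiff := (hu.differentiableOn two_ne_zero) (x, 0) (le_refl (0 : ℝ))
  rw [closedUpperHalfPlane_eq] at hdiff ⊢
  exact hdiff.hasFDerivWithinAt.comp_prodMk_right.derivWithin (uniqueDiffOn_Ici 0 0 self_mem_Ici)

end HalfPlane

section Decay

variable {E : Type*} [NormedAddCommGroup E] [NormedSpace ℝ E] {u : ℝ × ℝ → E} {C α : ℝ}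

theorem openUpperHalfPlane_subset : {ξ : ℝ × ℝ | 0 < ξ.2} ⊆ H₊ := fun ξ (h : 0 < ξ.2) ↦ h.le

theorem hasDerivAt_integral_horizontal_slice (hα : 0 < α) (hu : ContDiffOn ℝ 2 u H₊)
    (h₀ : ∀ ξ ∈ H₊, ‖u ξ‖ ≤ C * exp (-α * ξ.2))
    (h₁ : ∀ ξ ∈ H₊, ‖fderivWithin ℝ u H₊ ξ‖ ≤ C * exp (-α * ξ.2)) (x : ℝ) :
    HasDerivAt (fun x ↦ ∫ t in Ioi 0, u (x, t))
      (∫ t in Ioi 0, fderivWithin ℝ u H₊ (x, t) (1, 0)) x :=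
  hasDerivAt_integral_Ioi_of_norm_le_exp hα (hu.continuousOn.mono openUpperHalfPlane_subset)
    ((hu.continuousOn_fderivWithin_upperHalfPlane _).mono openUpperHalfPlane_subset)
    (fun ξ hξ ↦ h₀ ξ hξ.le)
    (fun ξ hξ ↦ ((fderivWithin ℝ u H₊ ξ).unit_le_opNorm _ norm_one_zero.le).trans (h₁ ξ hξ.le))
    (fun _ _ ht ↦ hasDerivAt_horizontal_slice hu _ ht) x

theorem hasDerivAt_integral_horizontal_slice_fderivWithin (hα : 0 < α)
    (hu : ContDiffOn ℝ 2 u H₊)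
    (h₁ : ∀ ξ ∈ H₊, ‖fderivWithin ℝ u H₊ ξ‖ ≤ C * exp (-α * ξ.2))
    (h₂ : ∀ ξ ∈ H₊, ‖fderivWithin ℝ (fderivWithin ℝ u H₊) H₊ ξ‖ ≤ C * exp (-α * ξ.2))
    (x : ℝ) :
    HasDerivAt (fun x ↦ ∫ t in Ioi 0, fderivWithin ℝ u H₊ (x, t) (1, 0))
      (∫ t in Ioi 0, fderivWithin ℝ (fderivWithin ℝ u H₊) H₊ (x, t) (1, 0) (1, 0)) x :=
  hasDerivAt_integral_Ioi_of_norm_le_exp hα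
    ((hu.continuousOn_fderivWithin_upperHalfPlane _).mono openUpperHalfPlane_subset)
    ((hu.continuousOn_fderivWithin_fderivWithin_upperHalfPlane _ _).mono
      openUpperHalfPlane_subset)
    (fun ξ hξ ↦ ((fderivWithin ℝ u H₊ ξ).unit_le_opNorm _ norm_one_zero.le).trans (h₁ ξ hξ.le))
    (fun ξ hξ ↦ ((fderivWithin ℝ (fderivWithin ℝ u H₊) H₊ ξ).unit_le_opNorm₂ norm_one_zero.le
      norm_one_zero.le).trans (h₂ ξ hξ.le))
    (fun _ _ ht ↦ hasDerivAt_horizontal_slice_fderivWithin hu _ ht) x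

theorem integral_vertical_slice_fderivWithin_fderivWithin [CompleteSpace E] (hα : 0 < α)
    (hu : ContDiffOn ℝ 2 u H₊)
    (h₁ : ∀ ξ ∈ H₊, ‖fderivWithin ℝ u H₊ ξ‖ ≤ C * exp (-α * ξ.2))
    (h₂ : ∀ ξ ∈ H₊, ‖fderivWithin ℝ (fderivWithin ℝ u H₊) H₊ ξ‖ ≤ C * exp (-α * ξ.2))
    (x : ℝ) :
    ∫ t in Ioi 0, fderivWithin ℝ (fderivWithin ℝ u H₊) H₊ (x, t) (0, 1) (0, 1)
      = -fderivWithin ℝ u H₊ (x, 0) (0, 1) := by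
  have hslice : MapsTo (fun t : ℝ ↦ (x, t)) (Ici 0) H₊ := fun _ ht ↦ ht
  have hintegrable : IntegrableOn
      (fun t ↦ fderivWithin ℝ (fderivWithin ℝ u H₊) H₊ (x, t) (0, 1) (0, 1)) (Ioi 0) :=
    integrableOn_Ioi_of_norm_le_exp hα
      (((hu.continuousOn_fderivWithin_fderivWithin_upperHalfPlane _ _).comp
        (Continuous.prodMk_right x).continuousOn hslice).mono Ioi_subset_Ici_self)
      fun t ht ↦ ((fderivWithin ℝ (fderivWithin ℝ u H₊) H₊ (x, t)).unit_le_opNorm₂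
        norm_zero_one.le norm_zero_one.le).trans (h₂ (x, t) (mem_Ioi.1 ht).le)
  exact integral_Ioi_of_hasDerivAt_of_norm_le_exp hα
    (((hu.continuousOn_fderivWithin_upperHalfPlane _).comp
      (Continuous.prodMk_right x).continuousOn hslice) 0 self_mem_Ici)
    (fun _ ht ↦ hasDerivAt_vertical_slice_fderivWithin hu x ht) hintegrable
    fun t ht ↦ ((fderivWithin ℝ u H₊ (x, t)).unit_le_opNorm _ norm_zero_one.le).trans
      (h₁ (x, t) (mem_Ioi.1 ht).le)

end Decay

theorem integral_along_vertical_second_derivative_general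
    (u : ℝ × ℝ → ℝ) (C α : ℝ) (hα : 0 < α)
    (hu : ContDiffOn ℝ 2 u {ξ : ℝ × ℝ | 0 ≤ ξ.2})
    (hharm : ∀ ξ : ℝ × ℝ, 0 < ξ.2 →
      iteratedDeriv 2 (fun x₁ => u (x₁, ξ.2)) ξ.1 +
        iteratedDeriv 2 (fun t => u (ξ.1, t)) ξ.2 = 0)
    (hdecay : ∀ ξ : ℝ × ℝ, 0 ≤ ξ.2 → |u ξ| ≤ C * Real.exp (-α * ξ.2))
    (hdecay₁ : ∀ ξ : ℝ × ℝ, 0 ≤ ξ.2 →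
      ‖fderivWithin ℝ u {ξ' : ℝ × ℝ | 0 ≤ ξ'.2} ξ‖ ≤ C * Real.exp (-α * ξ.2))
    (hdecay₂ : ∀ ξ : ℝ × ℝ, 0 ≤ ξ.2 →
      ‖iteratedFDerivWithin ℝ 2 u {ξ' : ℝ × ℝ | 0 ≤ ξ'.2} ξ‖ ≤ C * Real.exp (-α * ξ.2)) :
    Differentiable ℝ (fun x₁ : ℝ => ∫ t in Set.Ioi (0 : ℝ), u (x₁, t)) ∧
    Differentiable ℝ (deriv (fun x₁ : ℝ => ∫ t in Set.Ioi (0 : ℝ), u (x₁, t))) ∧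
    ∀ ξ₁ : ℝ,
      deriv (deriv (fun x₁ : ℝ => ∫ t in Set.Ioi (0 : ℝ), u (x₁, t))) ξ₁
        = derivWithin (fun t => u (ξ₁, t)) (Set.Ici 0) 0 := by
  have hdecay₂' (ξ : ℝ × ℝ) (hξ : ξ ∈ H₊) :
      ‖fderivWithin ℝ (fderivWithin ℝ u H₊) H₊ ξ‖ ≤ C * exp (-α * ξ.2) :=
    (norm_fderivWithin_fderivWithin uniqueDiffOn_closedUpperHalfPlane hξ).trans_le (hdecay₂ ξ hξ)
  have hg := hasDerivAt_integral_horizontal_slice hα hu hdecay hdecay₁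
  have hg' := hasDerivAt_integral_horizontal_slice_fderivWithin hα hu hdecay₁ hdecay₂'
  have hderiv : deriv (fun x ↦ ∫ t in Ioi 0, u (x, t))
      = fun x ↦ ∫ t in Ioi 0, fderivWithin ℝ u H₊ (x, t) (1, 0) :=
    funext fun x ↦ (hg x).deriv
  have hlaplace (x : ℝ) :
      ∫ t in Ioi 0, fderivWithin ℝ (fderivWithin ℝ u H₊) H₊ (x, t) (1, 0) (1, 0)
        = -∫ t in Ioi 0, fderivWithin ℝ (fderivWithin ℝ u H₊) H₊ (x, t) (0, 1) (0, 1) := by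
    rw [← integral_neg]
    refine setIntegral_congr_fun measurableSet_Ioi fun t ht ↦ ?_
    have hharm_xt := hharm (x, t) ht
    rw [iteratedDeriv_two_horizontal_slice hu x ht, iteratedDeriv_two_vertical_slice hu x ht]
      at hharm_xt
    exact eq_neg_of_add_eq_zero_left hharm_xt
  refine ⟨fun x ↦ (hg x).differentiableAt, hderiv ▸ fun x ↦ (hg' x).differentiableAt,
    fun x ↦ ?_⟩
  rw [hderiv, (hg' x).deriv, hlaplace, neg_eq_iff_eq_neg.2
    (integral_vertical_slice_fderivWithin_fderivWithin hα hu hdecay₁ hdecay₂' x),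
    derivWithin_vertical_slice_zero hu]

/-- The identity `d²/dξ₁² ∫_0^∞ u(ξ₁, t) dt = ∂u/∂ξ₂(ξ₁, 0)` used in the proof of
Lemma 5.2: for `u` which is `C²` on the closed upper half-plane, harmonic on the open
upper half-plane and exponentially decaying together with its gradient and second
partial derivatives, the function `g(ξ₁) = ∫_0^∞ u(ξ₁, t) dt` is twice differentiable
with `g''(ξ₁) = ∂u/∂ξ₂(ξ₁, 0)`. -/
theorem integral_along_vertical_second_derivative
    (u : ℝ × ℝ → ℝ) (C α : ℝ) (hC : 0 < C) (hα : 0 < α)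
    (hu : ContDiffOn ℝ 2 u {ξ : ℝ × ℝ | 0 ≤ ξ.2})
    (hharm : ∀ ξ : ℝ × ℝ, 0 < ξ.2 →
      iteratedDeriv 2 (fun x₁ => u (x₁, ξ.2)) ξ.1 +
        iteratedDeriv 2 (fun t => u (ξ.1, t)) ξ.2 = 0)
    (hdecay : ∀ ξ : ℝ × ℝ, 0 ≤ ξ.2 → |u ξ| ≤ C * Real.exp (-α * ξ.2))
    (hdecay₁ : ∀ ξ : ℝ × ℝ, 0 ≤ ξ.2 →
      ‖fderivWithin ℝ u {ξ' : ℝ × ℝ | 0 ≤ ξ'.2} ξ‖ ≤ C * Real.exp (-α * ξ.2))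
    (hdecay₂ : ∀ ξ : ℝ × ℝ, 0 ≤ ξ.2 →
      ‖iteratedFDerivWithin ℝ 2 u {ξ' : ℝ × ℝ | 0 ≤ ξ'.2} ξ‖ ≤ C * Real.exp (-α * ξ.2)) :
    Differentiable ℝ (fun x₁ : ℝ => ∫ t in Set.Ioi (0 : ℝ), u (x₁, t)) ∧
    Differentiable ℝ (deriv (fun x₁ : ℝ => ∫ t in Set.Ioi (0 : ℝ), u (x₁, t))) ∧
    ∀ ξ₁ : ℝ,
      deriv (deriv (fun x₁ : ℝ => ∫ t in Set.Ioi (0 : ℝ), u (x₁, t))) ξ₁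
        = derivWithin (fun t => u (ξ₁, t)) (Set.Ici 0) 0 :=
  integral_along_vertical_second_derivative_general u C α hα hu hharm hdecay hdecay₁ hdecay₂
end

section
/- There exists a constant C > 0 such that for every c ∈ (0, 1/2] the integrand t ↦ log(cosh t + √(sinh(t)² + c²)) − t is nonnegative on (0, ∞) and 0 ≤ ∫_0^∞ (log(cosh t + √(sinh(t)² + c²)) − t) dt ≤ C c² (1 + |log c|). (With c = cos η this is the estimate (5.14): ∫_0^∞ X_η(π/2, t) dt = O(η₁² ln η₁) as η → π/2, where η₁ = π/2 − η and X_η(π/2, t) = ln(cosh t + √(cosh² t − sin² η)) − t.) -/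
/-!
Since `cosh t + sinh t = exp t`, the integrand equals `log (1 + exp (-t) * g)` with
`g = √(sinh t ^ 2 + c ^ 2) - sinh t`, so it lies between `0` and `exp (-t) * g`. For `s ≥ 0`
the gap `√(s ^ 2 + c ^ 2) - s` is at most `|c|` and at most `c ^ 2 / (2 * s)`; with
`sinh t ≥ t` this bounds the integrand by `c` on `(0, c)`, by `c ^ 2 / (2 * t)` on `(c, 1)` and
by `c ^ 2 * exp (-t) / 2` on `(1, ∞)`. The three pieces contribute `c ^ 2`, `c ^ 2 * |log c| / 2`
and at most `c ^ 2 / 2`.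
-/

open MeasureTheory Real Set

noncomputable def logCoshGap (c t : ℝ) : ℝ := log (cosh t + √(sinh t ^ 2 + c ^ 2)) - t

lemma log_sub_le_mul_exp_neg_sub_one {y : ℝ} (hy : 0 < y) (t : ℝ) :
    log y - t ≤ y * exp (-t) - 1 := by
  have := log_le_sub_one_of_pos (mul_pos hy (exp_pos (-t)))
  rwa [log_mul hy.ne' (exp_pos _).ne', log_exp, ← sub_eq_add_neg] at this

lemma sqrt_sq_add_sq_sub_le_abs {s : ℝ} (hs : 0 ≤ s) (c : ℝ) : √(s ^ 2 + c ^ 2) - s ≤ |c| := by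
  rw [sub_le_iff_le_add, sqrt_le_iff, ← sq_abs c]
  constructor <;> nlinarith [abs_nonneg c]

lemma sqrt_sq_add_sq_sub_le_div {s : ℝ} (hs : 0 < s) (c : ℝ) :
    √(s ^ 2 + c ^ 2) - s ≤ c ^ 2 / (2 * s) := by
  rw [sub_le_iff_le_add, sqrt_le_iff]
  refine ⟨by positivity, ?_⟩
  have : 2 * s * (c ^ 2 / (2 * s)) = c ^ 2 := by field_simp
  nlinarith [sq_nonneg (c ^ 2 / (2 * s))]

lemma le_sqrt_sq_add_sq (x c : ℝ) : x ≤ √(x ^ 2 + c ^ 2) :=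
  (le_abs_self _).trans (abs_le_sqrt (by nlinarith))

lemma logCoshGap_nonneg (c t : ℝ) : 0 ≤ logCoshGap c t := by
  have : exp t ≤ cosh t + √(sinh t ^ 2 + c ^ 2) := by
    rw [← cosh_add_sinh]; gcongr; exact le_sqrt_sq_add_sq (sinh t) c
  rw [logCoshGap, sub_nonneg]
  exact (le_log_iff_exp_le (by positivity)).2 this

lemma logCoshGap_le (c t : ℝ) :
    logCoshGap c t ≤ exp (-t) * (√(sinh t ^ 2 + c ^ 2) - sinh t) := by
  have hpos : 0 < cosh t + √(sinh t ^ 2 + c ^ 2) := by positivity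
  have hexp : exp t * exp (-t) = 1 := by rw [← exp_add, add_neg_cancel, exp_zero]
  calc logCoshGap c t ≤ (cosh t + √(sinh t ^ 2 + c ^ 2)) * exp (-t) - 1 :=
        log_sub_le_mul_exp_neg_sub_one hpos t
    _ = exp (-t) * (√(sinh t ^ 2 + c ^ 2) - sinh t) := by
        linear_combination exp (-t) * cosh_add_sinh t + hexp

lemma logCoshGap_le_abs_mul_exp_neg (c : ℝ) {t : ℝ} (ht : 0 ≤ t) :
    logCoshGap c t ≤ |c| * exp (-t) :=
  (logCoshGap_le c t).trans <| by
    rw [mul_comm |c|]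
    exact mul_le_mul_of_nonneg_left (sqrt_sq_add_sq_sub_le_abs (sinh_nonneg_iff.2 ht) c)
      (exp_pos _).le

lemma logCoshGap_le_div (c : ℝ) {t : ℝ} (ht : 0 < t) :
    logCoshGap c t ≤ c ^ 2 * exp (-t) / (2 * t) := by
  have hsinh : c ^ 2 / (2 * sinh t) ≤ c ^ 2 / (2 * t) := by
    gcongr; exact self_le_sinh_iff.2 ht.le
  calc logCoshGap c t ≤ exp (-t) * (√(sinh t ^ 2 + c ^ 2) - sinh t) := logCoshGap_le c t
    _ ≤ exp (-t) * (c ^ 2 / (2 * t)) := by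
        gcongr
        exact (sqrt_sq_add_sq_sub_le_div (sinh_pos_iff.2 ht) c).trans hsinh
    _ = c ^ 2 * exp (-t) / (2 * t) := by ring

lemma continuous_logCoshGap (c : ℝ) : Continuous (logCoshGap c) := by
  have harg : Continuous fun t => cosh t + √(sinh t ^ 2 + c ^ 2) := by fun_prop
  exact (harg.log fun t => by positivity).sub continuous_id

lemma integrableOn_logCoshGap (c : ℝ) : IntegrableOn (logCoshGap c) (Ioi 0) := by
  have hdom : IntegrableOn (fun t => |c| * exp (-t)) (Ioi 0) := by
    simpa [IntegrableOn] using (exp_neg_integrableOn_Ioi 0 one_pos).const_mul |c|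
  refine hdom.mono' (continuous_logCoshGap c).aestronglyMeasurable.restrict ?_
  filter_upwards [self_mem_ae_restrict measurableSet_Ioi] with t ht
  rw [norm_of_nonneg (logCoshGap_nonneg c t)]
  exact logCoshGap_le_abs_mul_exp_neg c ht.le

lemma intervalIntegral_logCoshGap_le_sq {c : ℝ} (hc : 0 ≤ c) :
    ∫ t in 0..c, logCoshGap c t ≤ c ^ 2 := by
  have hbound : ∀ t ∈ Icc 0 c, logCoshGap c t ≤ c := fun t ht =>
    calc logCoshGap c t ≤ |c| * exp (-t) := logCoshGap_le_abs_mul_exp_neg c ht.1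
      _ ≤ c := by
        rw [abs_of_nonneg hc]
        exact mul_le_of_le_one_right hc (exp_le_one_iff.2 (neg_nonpos.2 ht.1))
  calc ∫ t in 0..c, logCoshGap c t ≤ ∫ _ in 0..c, c :=
        intervalIntegral.integral_mono_on hc ((continuous_logCoshGap c).intervalIntegrable _ _)
          intervalIntegrable_const hbound
    _ = c ^ 2 := by simp [sq]

lemma intervalIntegral_logCoshGap_le_log {c : ℝ} (hc0 : 0 < c) (hc1 : c ≤ 1) :
    ∫ t in c..1, logCoshGap c t ≤ c ^ 2 / 2 * log c⁻¹ := by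
  have hbound : ∀ t ∈ Icc c 1, logCoshGap c t ≤ c ^ 2 / 2 * t⁻¹ := fun t ht => by
    have ht0 : 0 < t := hc0.trans_le ht.1
    calc logCoshGap c t ≤ c ^ 2 * exp (-t) / (2 * t) := logCoshGap_le_div c ht0
      _ ≤ c ^ 2 * 1 / (2 * t) := by gcongr; exact exp_le_one_iff.2 (neg_nonpos.2 ht0.le)
      _ = c ^ 2 / 2 * t⁻¹ := by field_simp
  have hinv : IntervalIntegrable (fun t => c ^ 2 / 2 * t⁻¹) volume c 1 :=
    (intervalIntegral.intervalIntegrable_inv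
      (fun t ht => (hc0.trans_le (by simpa [hc1] using ht.1)).ne') continuousOn_id).const_mul _
  calc ∫ t in c..1, logCoshGap c t ≤ ∫ t in c..1, c ^ 2 / 2 * t⁻¹ :=
        intervalIntegral.integral_mono_on hc1 ((continuous_logCoshGap c).intervalIntegrable _ _)
          hinv hbound
    _ = c ^ 2 / 2 * log c⁻¹ := by
        rw [intervalIntegral.integral_const_mul, integral_inv_of_pos hc0 one_pos, one_div]

lemma setIntegral_Ioi_logCoshGap_le (c : ℝ) {a : ℝ} (ha : 0 < a) :
    ∫ t in Ioi a, logCoshGap c t ≤ c ^ 2 / (2 * a) * exp (-a) := by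
  have hexp : IntegrableOn (fun t => c ^ 2 / (2 * a) * exp (-t)) (Ioi a) := by
    simpa [IntegrableOn] using (exp_neg_integrableOn_Ioi a one_pos).const_mul (c ^ 2 / (2 * a))
  have hbound : ∀ t ∈ Ioi a, logCoshGap c t ≤ c ^ 2 / (2 * a) * exp (-t) := fun t ht =>
    calc logCoshGap c t ≤ c ^ 2 * exp (-t) / (2 * t) := logCoshGap_le_div c (ha.trans ht)
      _ = c ^ 2 / (2 * t) * exp (-t) := by ring
      _ ≤ c ^ 2 / (2 * a) * exp (-t) := by gcongr; exact le_of_lt ht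
  calc ∫ t in Ioi a, logCoshGap c t ≤ ∫ t in Ioi a, c ^ 2 / (2 * a) * exp (-t) :=
        setIntegral_mono_on ((integrableOn_logCoshGap c).mono_set (Ioi_subset_Ioi ha.le)) hexp
          measurableSet_Ioi hbound
    _ = c ^ 2 / (2 * a) * exp (-a) := by rw [integral_const_mul, integral_exp_neg_Ioi]

/-- Estimate (5.14): there is `C > 0` such that for every `c ∈ (0, 1/2]` the integrand
`t ↦ log(cosh t + √(sinh² t + c²)) − t` is nonnegative, integrable on `(0, ∞)`, and
`0 ≤ ∫_0^∞ (log(cosh t + √(sinh² t + c²)) − t) dt ≤ C c² (1 + |log c|)`. -/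
theorem integral_log_cosh_estimate :
    ∃ C > (0 : ℝ), ∀ c : ℝ, c ∈ Set.Ioc (0 : ℝ) (1 / 2) →
      (∀ t ∈ Set.Ioi (0 : ℝ),
        0 ≤ Real.log (Real.cosh t + Real.sqrt ((Real.sinh t) ^ 2 + c ^ 2)) - t) ∧
      IntegrableOn
        (fun t => Real.log (Real.cosh t + Real.sqrt ((Real.sinh t) ^ 2 + c ^ 2)) - t)
        (Set.Ioi (0 : ℝ)) ∧
      0 ≤ ∫ t in Set.Ioi (0 : ℝ),
            (Real.log (Real.cosh t + Real.sqrt ((Real.sinh t) ^ 2 + c ^ 2)) - t) ∧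
      (∫ t in Set.Ioi (0 : ℝ),
            (Real.log (Real.cosh t + Real.sqrt ((Real.sinh t) ^ 2 + c ^ 2)) - t))
        ≤ C * c ^ 2 * (1 + |Real.log c|) := by
  refine ⟨3 / 2, by norm_num, fun c ⟨hc0, hc2⟩ => ?_⟩
  have hc1 : c ≤ 1 := by linarith
  have hI := integrableOn_logCoshGap c
  refine ⟨fun t _ => logCoshGap_nonneg c t, hI,
    setIntegral_nonneg measurableSet_Ioi fun t _ => logCoshGap_nonneg c t, ?_⟩
  change ∫ t in Ioi 0, logCoshGap c t ≤ 3 / 2 * c ^ 2 * (1 + |log c|)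
  have hii : ∀ a b, IntervalIntegrable (logCoshGap c) volume a b :=
    (continuous_logCoshGap c).intervalIntegrable
  have htail : ∫ t in Ioi 1, logCoshGap c t ≤ c ^ 2 / 2 :=
    (setIntegral_Ioi_logCoshGap_le c one_pos).trans <| by
      rw [mul_one]
      exact mul_le_of_le_one_right (by positivity) (exp_le_one_iff.2 (by norm_num))
  have hlog : |log c| = log c⁻¹ := by rw [abs_of_nonpos (log_nonpos hc0.le hc1), log_inv]
  calc ∫ t in Ioi 0, logCoshGap c t
      = (∫ t in 0..c, logCoshGap c t) + (∫ t in c..1, logCoshGap c t)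
          + ∫ t in Ioi 1, logCoshGap c t := by
        rw [intervalIntegral.integral_add_adjacent_intervals (hii 0 c) (hii c 1),
          intervalIntegral.integral_interval_add_Ioi hI (hI.mono_set (Ioi_subset_Ioi zero_le_one))]
    _ ≤ c ^ 2 + c ^ 2 / 2 * log c⁻¹ + c ^ 2 / 2 := by
        gcongr
        exacts [intervalIntegral_logCoshGap_le_sq hc0.le,
          intervalIntegral_logCoshGap_le_log hc0 hc1]
    _ ≤ 3 / 2 * c ^ 2 * (1 + |log c|) := by
        have := mul_nonneg (sq_nonneg c) (abs_nonneg (log c))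
        rw [hlog] at this ⊢
        linarith
end
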